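/- arXiv:1902.06507 — 5 statements merged into one kernel-verified Lean document; each statement's English description precedes it below -/
import Mathlib

section
/- Let K be a field, E a finite set, and W ⊆ K^E any configuration. Then the radical of the Jacobian ideal J_W equals the radical of the ideal M_W of submaximal minors of the configuration form Q_W; in particular, the minimal primes of K[x_e : e ∈ E] over J_W and over M_W coincide. -/
/-!
By Jacobi's formula, `∂ψ/∂x_e = (Wᵀ · adj Q · W)_{ee}`, where `W` is the coefficient matrix
of the basis; so `J_W` lies in the ideal generated by the entries of `adj Q`, and these are,
up to sign, exactly the submaximal minors generating `M_W`.

Conversely, let `P ⊇ J_W` be prime and work over the fraction field of `K[x] ⧸ P`. There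
`det Q = 0`, so `adj Q` has rank at most one, `adj Q = u vᵀ`. Then `N = Wᵀ (adj Q) W` is a
symmetric matrix of rank at most one with zero diagonal, hence `N_{ef}² = N_{ee} N_{ff} = 0`
and `N = 0`. Since `W` has linearly independent rows it has a right inverse, so `adj Q = 0`
modulo `P`.
-/

open scoped BigOperators

namespace Config

variable {K : Type} [Field K] {E : Type} [Fintype E] [DecidableEq E]

/-- `w` is a (linear) basis of the configuration `W ⊆ K^E`. -/
def IsBasisOf {r : ℕ} (w : Fin r → E → K) (W : Submodule K (E → K)) : Prop :=
  LinearIndependent K w ∧ Submodule.span K (Set.range w) = W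

/-- The configuration (bilinear) form `Q_W` computed from the basis `w`: the symmetric
`r × r` matrix with entries `∑_{e ∈ E} x_e · w^i_e · w^j_e` over `K[x_e : e ∈ E]`. -/
noncomputable def Qform {r : ℕ} (w : Fin r → E → K) :
    Matrix (Fin r) (Fin r) (MvPolynomial E K) :=
  Matrix.of fun i j => ∑ e : E, MvPolynomial.C (w i e * w j e) * MvPolynomial.X e

/-- The configuration polynomial `ψ_W = det Q_W` computed from the basis `w`. -/
noncomputable def psi {r : ℕ} (w : Fin r → E → K) : MvPolynomial E K :=
  (Qform w).det

/-- The ideal `M_W` generated by the submaximal, i.e. `(r−1) × (r−1)`, minors of the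
configuration form `Q_W`. -/
noncomputable def minorIdeal {r : ℕ} (w : Fin r → E → K) : Ideal (MvPolynomial E K) :=
  Ideal.span {p | ∃ f g : Fin (r - 1) ↪ Fin r, p = Matrix.det ((Qform w).submatrix f g)}

/-- The Jacobian ideal `J_W = ⟨ψ_W⟩ + ⟨∂ψ_W/∂x_e : e ∈ E⟩`. -/
noncomputable def jacIdeal {r : ℕ} (w : Fin r → E → K) : Ideal (MvPolynomial E K) :=
  Ideal.span ({psi w} ∪ Set.range fun e => MvPolynomial.pderiv e (psi w))

end Config

open Matrix

namespace Derivation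

variable {R A : Type*} [CommRing R] [CommRing A] [Algebra R A] (D : Derivation R A A)

theorem leibniz_prod {ι : Type*} [DecidableEq ι] (s : Finset ι) (f : ι → A) :
    D (∏ i ∈ s, f i) = ∑ i ∈ s, (∏ j ∈ s.erase i, f j) * D (f i) := by
  induction s using Finset.induction_on with
  | empty => simp
  | @insert a s ha ih =>
    rw [Finset.prod_insert ha, D.leibniz, smul_eq_mul, smul_eq_mul, ih, Finset.mul_sum,
      Finset.sum_insert ha, Finset.erase_insert ha, add_comm]
    congr 1
    refine Finset.sum_congr rfl fun i hi => ?_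
    rw [Finset.erase_insert_of_ne (by rintro rfl; exact ha hi),
      Finset.prod_insert (fun h => ha (Finset.mem_of_mem_erase h)), mul_assoc]

theorem leibniz_det_eq_sum_det_updateCol {n : Type*} [DecidableEq n] [Fintype n]
    (M : Matrix n n A) : D M.det = ∑ k, (M.updateCol k fun i => D (M i k)).det := by
  simp only [det_apply', map_sum, Finset.sum_comm (γ := n)]
  refine Finset.sum_congr rfl fun σ _ => ?_
  rw [D.leibniz, D.map_intCast, smul_zero, add_zero, smul_eq_mul, leibniz_prod, Finset.mul_sum]
  refine Finset.sum_congr rfl fun k _ => ?_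
  rw [← Finset.mul_prod_erase _ _ (Finset.mem_univ k), updateCol_self,
    Finset.prod_congr rfl fun i hi => updateCol_ne (Finset.ne_of_mem_erase hi)]
  ring

theorem leibniz_det {n : Type*} [DecidableEq n] [Fintype n] (M : Matrix n n A) :
    D M.det = (M.adjugate * M.map D).trace := by
  simp only [leibniz_det_eq_sum_det_updateCol, ← cramer_apply, cramer_eq_adjugate_mulVec,
    trace, diag, mul_apply, mulVec, dotProduct, map_apply]

end Derivation

theorem Fin.exists_succAbove_comp_perm {n : ℕ} (f : Fin n ↪ Fin (n + 1)) :
    ∃ (i : Fin (n + 1)) (σ : Equiv.Perm (Fin n)), ⇑f = i.succAbove ∘ σ := by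
  obtain ⟨i, hi⟩ : ∃ i, i ∉ Set.range f := by
    by_contra! h
    simpa using Fintype.card_le_of_surjective f h
  choose σ hσ using fun q => Fin.exists_succAbove_eq (x := f q) (y := i) fun h => hi ⟨q, h⟩
  have hσinj : Function.Injective σ := fun x y h => f.injective (by rw [← hσ, ← hσ, h])
  exact ⟨i, Equiv.ofBijective σ (Finite.injective_iff_bijective.mp hσinj),
    funext fun q => (hσ q).symm⟩

universe u

theorem Ideal.le_radical_of_forall_le_ker {R : Type u} [CommRing R] {I J : Ideal R}
    (h : ∀ (F : Type u) [Field F] (φ : R →+* F), I ≤ RingHom.ker φ → J ≤ RingHom.ker φ) :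
    J ≤ I.radical := by
  rw [Ideal.radical_eq_sInf]
  refine le_sInf fun P ⟨hIP, hP⟩ => ?_
  have hker : RingHom.ker ((algebraMap (R ⧸ P) (FractionRing (R ⧸ P))).comp
      (Ideal.Quotient.mk P)) = P := by
    rw [RingHom.ker_comp_of_injective _ (IsFractionRing.injective _ _), Ideal.mk_ker]
  rw [← hker] at hIP ⊢
  exact h _ _ hIP

namespace Matrix

theorem span_det_submatrix_eq_span_adjugate {R : Type*} [CommRing R] {n : ℕ}
    (M : Matrix (Fin (n + 1)) (Fin (n + 1)) R) :
    Ideal.span {p | ∃ f g : Fin n ↪ Fin (n + 1), p = (M.submatrix f g).det} =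
      Ideal.span {p | ∃ i j, p = M.adjugate i j} := by
  apply le_antisymm <;> rw [Ideal.span_le]
  · rintro _ ⟨f, g, rfl⟩
    obtain ⟨i, σ, hf⟩ := Fin.exists_succAbove_comp_perm f
    obtain ⟨j, τ, hg⟩ := Fin.exists_succAbove_comp_perm g
    have hminor :
        (M.submatrix i.succAbove j.succAbove).det = (-1) ^ (i + j : ℕ) * M.adjugate j i := by
      rw [adjugate_fin_succ_eq_det_submatrix, ← mul_assoc, ← pow_add,
        Even.neg_one_pow ⟨_, rfl⟩, one_mul]
    have hperm : M.submatrix f g =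
        ((M.submatrix i.succAbove j.succAbove).submatrix id τ).submatrix σ id := by
      rw [hf, hg]; rfl
    rw [SetLike.mem_coe, hperm, det_permute, det_permute', hminor]
    exact Ideal.mul_mem_left _ _ (Ideal.mul_mem_left _ _ (Ideal.mul_mem_left _ _
      (Ideal.subset_span ⟨j, i, rfl⟩)))
  · rintro _ ⟨i, j, rfl⟩
    rw [SetLike.mem_coe, adjugate_fin_succ_eq_det_submatrix M i j]
    exact Ideal.mul_mem_left _ _ (Ideal.subset_span ⟨j.succAboveEmb, i.succAboveEmb, rfl⟩)

theorem exists_mul_eq_one_of_linearIndependent_row {K m n : Type*} [Field K] [Fintype m]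
    [DecidableEq m] [Fintype n] {A : Matrix m n K}
    (hA : LinearIndependent K A.row) : ∃ B : Matrix n m K, A * B = 1 := by
  classical
  have hinj : LinearMap.ker Aᵀ.mulVecLin = ⊥ := by
    rw [LinearMap.ker_eq_bot, mulVecLin_transpose, coe_vecMulLinear]
    exact vecMul_injective_iff.mpr hA
  obtain ⟨g, hg⟩ := LinearMap.exists_leftInverse_of_injective _ hinj
  refine ⟨(LinearMap.toMatrix' g)ᵀ, ?_⟩
  rw [← transpose_transpose A, ← transpose_mul, ← transpose_one, transpose_inj]
  apply Matrix.toLin'.injective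
  rwa [Matrix.toLin'_mul, Matrix.toLin'_toMatrix', Matrix.toLin'_one]

theorem exists_eq_vecMulVec_of_rank_le_one {F m n : Type*} [Field F] [Fintype m] [Fintype n]
    {A : Matrix m n F} (hA : A.rank ≤ 1) : ∃ (u : m → F) (v : n → F), A = vecMulVec u v := by
  rw [rank_eq_finrank_span_cols, Submodule.finrank_le_one_iff_isPrincipal] at hA
  obtain ⟨u, hu⟩ := hA.principal
  have hcol (j : n) : ∃ c : F, c • u = A.col j := by
    rw [← Submodule.mem_span_singleton, ← hu]
    exact Submodule.subset_span ⟨j, rfl⟩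
  choose v hv using hcol
  refine ⟨u, v, ext fun i j => ?_⟩
  rw [vecMulVec_apply, mul_comm, ← smul_eq_mul, ← Pi.smul_apply, hv, col_apply]

theorem rank_adjugate_le_one_of_det_eq_zero {F : Type*} [Field F] {n : ℕ}
    {M : Matrix (Fin n) (Fin n) F} (hM : M.det = 0) : M.adjugate.rank ≤ 1 := by
  by_cases h0 : M.adjugate = 0
  · simp [h0]
  obtain ⟨i, j, hij⟩ : ∃ i j, M.adjugate i j ≠ 0 := by
    by_contra! h
    exact h0 (ext h)
  cases n with
  | zero => exact i.elim0
  | succ n =>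
    have hminor : (M.submatrix j.succAbove i.succAbove).det ≠ 0 := by
      intro h
      rw [adjugate_fin_succ_eq_det_submatrix, h, mul_zero] at hij
      exact hij rfl
    have hrankM : n ≤ M.rank := by
      simpa [rank_of_det_ne_zero hminor] using rank_submatrix_le M j.succAbove i.succAbove
    have hMA : M * M.adjugate = 0 := by rw [mul_adjugate, hM, zero_smul]
    have hsum := rank_add_rank_le_card_of_mul_eq_zero hMA
    rw [Fintype.card_fin] at hsum
    omega

theorem vecMulVec_eq_zero_of_isSymm_of_diag_eq_zero {R n : Type*} [CommRing R] [IsDomain R]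
    {u v : n → R} (hsymm : (vecMulVec u v).IsSymm) (hdiag : (vecMulVec u v).diag = 0) :
    vecMulVec u v = 0 := by
  ext e f
  rw [zero_apply]
  have hdiag' (e) : u e * v e = 0 := congrFun hdiag e
  have : vecMulVec u v e f * vecMulVec u v f e = 0 := by
    rw [vecMulVec_apply, vecMulVec_apply,
      show u e * v f * (u f * v e) = u e * v e * (u f * v f) by ring, hdiag', zero_mul]
  rwa [hsymm.apply e f, mul_self_eq_zero] at this

theorem eq_zero_of_diag_transpose_mul_mul_eq_zero {R m n : Type*} [CommRing R] [IsDomain R]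
    [Fintype m] [DecidableEq m] [Fintype n] {A : Matrix m m R} (hA : A.IsSymm)
    (hrank : ∃ u v : m → R, A = vecMulVec u v) {B : Matrix m n R} {C : Matrix n m R}
    (hBC : B * C = 1) (hdiag : (Bᵀ * A * B).diag = 0) : A = 0 := by
  obtain ⟨u, v, rfl⟩ := hrank
  have hN : Bᵀ * vecMulVec u v * B = vecMulVec (Bᵀ *ᵥ u) (v ᵥ* B) := by
    rw [mul_vecMulVec, vecMulVec_mul]
  have hNsymm : (Bᵀ * vecMulVec u v * B).IsSymm := by
    rw [IsSymm, transpose_mul, transpose_mul, transpose_transpose, hA.eq, Matrix.mul_assoc]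
  have hN0 := vecMulVec_eq_zero_of_isSymm_of_diag_eq_zero (hN ▸ hNsymm) (hN ▸ hdiag)
  calc vecMulVec u v = (B * C)ᵀ * vecMulVec u v * (B * C) := by
        rw [hBC, transpose_one, Matrix.one_mul, Matrix.mul_one]
    _ = Cᵀ * (Bᵀ * vecMulVec u v * B) * C := by simp only [transpose_mul, Matrix.mul_assoc]
    _ = 0 := by rw [hN, hN0, Matrix.mul_zero, Matrix.zero_mul]

end Matrix

namespace Config

open MvPolynomial

variable {K : Type} [Field K] {E : Type} [Fintype E]

noncomputable def coeffMatrix {r : ℕ} (w : Fin r → E → K) :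
    Matrix (Fin r) E (MvPolynomial E K) :=
  of fun i e => C (w i e)

theorem Qform_isSymm {r : ℕ} (w : Fin r → E → K) : (Qform w).IsSymm := by
  ext i j
  simp only [Qform, transpose_apply, of_apply, mul_comm (w i _)]

theorem jacIdeal_eq_top (w : Fin 0 → E → K) : jacIdeal w = ⊤ :=
  (Ideal.eq_top_iff_one _).mpr (Ideal.subset_span (Set.mem_union_left _ det_fin_zero.symm))

theorem minorIdeal_eq_top (w : Fin 0 → E → K) : minorIdeal w = ⊤ :=
  (Ideal.eq_top_iff_one _).mpr
    (Ideal.subset_span ⟨Function.Embedding.refl _, Function.Embedding.refl _, det_fin_zero.symm⟩)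

variable [DecidableEq E]

theorem pderiv_Qform {r : ℕ} (w : Fin r → E → K) (e : E) (i j : Fin r) :
    pderiv e (Qform w i j) = C (w i e * w j e) := by
  simp [Qform, pderiv_X, Pi.single_apply]

theorem pderiv_psi {r : ℕ} (w : Fin r → E → K) (e : E) :
    pderiv e (psi w) = ((coeffMatrix w)ᵀ * (Qform w).adjugate * coeffMatrix w) e e := by
  rw [psi, Derivation.leibniz_det]
  simp only [trace, diag, mul_apply, map_apply, pderiv_Qform, transpose_apply, coeffMatrix,
    of_apply, Finset.sum_mul, map_mul]
  rw [Finset.sum_comm]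
  exact Finset.sum_congr rfl fun _ _ => Finset.sum_congr rfl fun _ _ => by ring

theorem jacIdeal_le_span_adjugate {n : ℕ} (w : Fin (n + 1) → E → K) :
    jacIdeal w ≤ Ideal.span {p | ∃ i j, p = (Qform w).adjugate i j} := by
  rw [jacIdeal, Ideal.span_le, Set.union_subset_iff, Set.singleton_subset_iff,
    Set.range_subset_iff]
  refine ⟨?_, fun e => ?_⟩
  · rw [SetLike.mem_coe, psi, det_eq_sum_mul_adjugate_row _ 0]
    exact Ideal.sum_mem _ fun j _ => Ideal.mul_mem_left _ _ (Ideal.subset_span ⟨j, 0, rfl⟩)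
  · rw [SetLike.mem_coe, pderiv_psi]
    simp only [mul_apply]
    exact Ideal.sum_mem _ fun j _ => Ideal.mul_mem_right _ _ (Ideal.sum_mem _ fun i _ =>
      Ideal.mul_mem_left _ _ (Ideal.subset_span ⟨i, j, rfl⟩))

theorem map_adjugate_Qform_eq_zero {r : ℕ} {w : Fin r → E → K} (hw : LinearIndependent K w)
    {F : Type} [Field F] (φ : MvPolynomial E K →+* F) (hφ : jacIdeal w ≤ RingHom.ker φ) :
    (Qform w).adjugate.map φ = 0 := by
  have hψ : φ (psi w) = 0 := hφ (Ideal.subset_span (Set.mem_union_left _ rfl))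
  have hpderiv (e : E) : φ (pderiv e (psi w)) = 0 :=
    hφ (Ideal.subset_span (Set.mem_union_right _ ⟨e, rfl⟩))
  have hdet : ((Qform w).map φ).det = 0 := by
    rwa [← RingHom.mapMatrix_apply, ← RingHom.map_det]
  have hadj : (Qform w).adjugate.map φ = ((Qform w).map φ).adjugate :=
    RingHom.map_adjugate φ (Qform w)
  obtain ⟨C₀, hC₀⟩ := exists_mul_eq_one_of_linearIndependent_row (A := of w) hw
  have hBC : (coeffMatrix w).map φ * C₀.map (φ.comp C) = 1 := by
    rw [show (coeffMatrix w).map φ = (of w).map (φ.comp C) from rfl, ← Matrix.map_mul, hC₀,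
      Matrix.map_one _ (map_zero _) (map_one _)]
  rw [hadj]
  refine eq_zero_of_diag_transpose_mul_mul_eq_zero ((Qform_isSymm w).map φ).adjugate
    (exists_eq_vecMulVec_of_rank_le_one (rank_adjugate_le_one_of_det_eq_zero hdet)) hBC
    (funext fun e => ?_)
  rw [Pi.zero_apply, diag_apply, ← hpderiv e, pderiv_psi, ← hadj, ← transpose_map,
    ← Matrix.map_mul, ← Matrix.map_mul, map_apply]

theorem span_adjugate_le_radical_jacIdeal {r : ℕ} {w : Fin r → E → K}
    (hw : LinearIndependent K w) :
    Ideal.span {p | ∃ i j, p = (Qform w).adjugate i j} ≤ (jacIdeal w).radical := by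
  refine Ideal.le_radical_of_forall_le_ker fun F _ φ hφ => ?_
  rw [Ideal.span_le]
  rintro _ ⟨i, j, rfl⟩
  exact RingHom.mem_ker.mpr (congrFun (congrFun (map_adjugate_Qform_eq_zero hw φ hφ) i) j)

/-- **Theorem (Non-smooth loci and second degeneracy schemes).**
For any configuration `W ⊆ K^E`, the radical of the Jacobian ideal `J_W` equals the
radical of the ideal `M_W` of submaximal minors of `Q_W`; in particular the minimal
primes over `J_W` and over `M_W` coincide. -/
theorem jacIdeal_radical_eq_minorIdeal_radical
    (W : Submodule K (E → K)) {r : ℕ} (w : Fin r → E → K) (hw : IsBasisOf w W) :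
    (jacIdeal w).radical = (minorIdeal w).radical ∧
    (jacIdeal w).minimalPrimes = (minorIdeal w).minimalPrimes := by
  have hrad : (jacIdeal w).radical = (minorIdeal w).radical := by
    cases r with
    | zero => rw [jacIdeal_eq_top, minorIdeal_eq_top]
    | succ n =>
      have hminor : minorIdeal w = Ideal.span {p | ∃ i j, p = (Qform w).adjugate i j} :=
        span_det_submatrix_eq_span_adjugate (Qform w)
      refine le_antisymm (Ideal.radical_mono (hminor ▸ jacIdeal_le_span_adjugate w)) ?_
      exact Ideal.radical_le_radical_iff.mpr (hminor ▸ span_adjugate_le_radical_jacIdeal hw.1)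
  exact ⟨hrad, by rw [← Ideal.radical_minimalPrimes, hrad, Ideal.radical_minimalPrimes]⟩

end Config
end

section
/- Let K be a field, W ⊆ K^E a realization of a matroid M, and F ⊆ E any subset. Then: (i) for every basis B of M, B ∩ F is a basis of the restriction M|_F if and only if B ∖ F is a basis of the contraction M/F; and (ii) for any fixed choices of bases of W, W/F and W|_F, there exists c ∈ K^* (independent of B) such that for every basis B of M with B ∩ F a basis of M|_F, c_{W,B} = c² · c_{W/F, B∖F} · c_{W|_F, B∩F}. -/
open scoped BigOperators

namespace Config

variable {K : Type} [Field K] {E : Type} [Fintype E] [DecidableEq E]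

/-- The coordinate functional `e^∨` of `K^E` restricted to a subspace `W ⊆ K^E`. -/
noncomputable def coordFun (W : Submodule K (E → K)) (e : E) : W →ₗ[K] K :=
  (LinearMap.proj e).comp W.subtype

/-- `S ⊆ E` is independent in the matroid `M_W` realized by the configuration `W`:
the restricted coordinate functionals `(e^∨|_W)_{e ∈ S}` are linearly independent. -/
def Indep (W : Submodule K (E → K)) (S : Finset E) : Prop :=
  LinearIndependent K (fun e : S => coordFun W e)

/-- The coefficient `c_{W,B} = (det (w^i_e)_{1≤i≤r, e∈B})²`, the squared determinant of
the `r × r` submatrix of the coefficient matrix of `w` with column set `B` (the square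
is independent of the chosen ordering of the columns). -/
noncomputable def cSq {r : ℕ} (w : Fin r → E → K) (B : Finset E) : K :=
  if h : B.card = r then
    (Matrix.det (Matrix.of fun i j : Fin r =>
      w i ((Finset.equivFinOfCardEq h).symm j : E))) ^ 2
  else 0

/-- The restriction configuration `W|_F ⊆ K^F`: the image of `W` under the
coordinate projection `K^E ↠ K^F`. -/
noncomputable def restrictConfig (W : Submodule K (E → K)) (F : Finset E) :
    Submodule K ({x : E // x ∈ F} → K) :=
  W.map (LinearMap.funLeft K K (fun x : {x : E // x ∈ F} => (x : E)))

/-- The deletion configuration `W ∖ F = W|_{E ∖ F} ⊆ K^{E ∖ F}`. -/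
noncomputable def deleteConfig (W : Submodule K (E → K)) (F : Finset E) :
    Submodule K ({x : E // x ∉ F} → K) :=
  W.map (LinearMap.funLeft K K (fun x : {x : E // x ∉ F} => (x : E)))

/-- The contraction configuration `W/F = W ∩ K^{E ∖ F} ⊆ K^{E ∖ F}`: the vectors of `W`
vanishing on `F`, viewed in the coordinates `E ∖ F`. -/
noncomputable def contractConfig (W : Submodule K (E → K)) (F : Finset E) :
    Submodule K ({x : E // x ∉ F} → K) :=
  (W ⊓ LinearMap.ker (LinearMap.funLeft K K (fun x : {x : E // x ∈ F} => (x : E)))).map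
    (LinearMap.funLeft K K (fun x : {x : E // x ∉ F} => (x : E)))

/-- `B` is a basis (a maximal independent set) of the matroid `M_W`. -/
def IsBase (W : Submodule K (E → K)) (B : Finset E) : Prop :=
  Indep W B ∧ ∀ S : Finset E, Indep W S → S.card ≤ B.card

end Config

/-!
Lift the chosen basis of `W|_F` to `W` and extend the chosen basis of `W/F` by zero: together
they form a basis of `W` whose coefficient matrix, with the columns in `F` listed first, is block
upper triangular with diagonal blocks the coefficient matrices of `W|_F` and `W/F`. Maximal
minors are the values of the determinant form on `W^*` of the dual basis at the coordinate
functionals, so changing the basis of `W` multiplies all of them by one nonzero constant `c`;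
reordering columns only changes their sign. Hence the squared minors factor as claimed whenever
`|B ∩ F| = rk M|_F`. Finally `B` is a base of `M_W` exactly when its squared minor is nonzero,
and the factorization then also gives (i).
-/

theorem LinearIndependent.sumElim_of_comp {R ι κ M N : Type*} [Ring R] [AddCommGroup M]
    [Module R M] [AddCommGroup N] [Module R N] (p : M →ₗ[R] N) {a : ι → M} {b : κ → M}
    (ha : LinearIndependent R (p ∘ a)) (hb : LinearIndependent R b) (hpb : ∀ k, p (b k) = 0) :
    LinearIndependent R (Sum.elim a b) :=
  (ha.of_comp p).sum_type hb <| (Submodule.range_ker_disjoint ha).mono_right <|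
    Submodule.span_le.2 <| Set.range_subset_iff.2 hpb

theorem Submodule.le_span_sumElim {R ι κ M N : Type*} [Ring R] [AddCommGroup M] [Module R M]
    [AddCommGroup N] [Module R N] (p : M →ₗ[R] N) {W : Submodule R M} {a : ι → M}
    {b : κ → M} (ha : ∀ i, a i ∈ W)
    (hmap : W.map p ≤ Submodule.span R (Set.range (p ∘ a)))
    (hker : W ⊓ LinearMap.ker p ≤ Submodule.span R (Set.range b)) :
    W ≤ Submodule.span R (Set.range (Sum.elim a b)) := by
  have hsa : Submodule.span R (Set.range a) ≤ W := Submodule.span_le.2 (Set.range_subset_iff.2 ha)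
  have hW : W ≤ Submodule.span R (Set.range a) ⊔ LinearMap.ker p := by
    rwa [← LinearMap.map_le_map_iff, Submodule.map_span, ← Set.range_comp]
  calc W = (Submodule.span R (Set.range a) ⊔ LinearMap.ker p) ⊓ W := (inf_eq_right.2 hW).symm
    _ = Submodule.span R (Set.range a) ⊔ LinearMap.ker p ⊓ W := sup_inf_assoc_of_le _ hsa
    _ ≤ Submodule.span R (Set.range a) ⊔ Submodule.span R (Set.range b) :=
      sup_le_sup_left (inf_comm W _ ▸ hker) _
    _ = Submodule.span R (Set.range (Sum.elim a b)) := by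
      rw [Set.Sum.elim_range, Submodule.span_union]

namespace Config

open Module

variable {K : Type} [Field K] {E : Type}

section Minors

variable {ι κ α : Type*} [Fintype ι] [DecidableEq ι]

noncomputable def minorDet (v : ι → α → K) (f : ι → α) : K :=
  (Matrix.of fun i j => v i (f j)).det

theorem minorDet_comp_equiv [Fintype κ] [DecidableEq κ] (v : κ → α → K) (f : κ → α)
    (e : ι ≃ κ) : minorDet (v ∘ e) (f ∘ e) = minorDet v f :=
  Matrix.det_submatrix_equiv_self e (Matrix.of fun k l => v k (f l))

theorem sq_minorDet_comp_perm (v : ι → α → K) (f : ι → α) (σ : Equiv.Perm ι) :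
    minorDet v (f ∘ σ) ^ 2 = minorDet v f ^ 2 := by
  have hsign : ((Equiv.Perm.sign σ : ℤ) : K) ^ 2 = 1 := by
    rw [← Int.cast_pow, ← Units.val_pow_eq_pow_val, Int.units_sq]; simp
  change ((Matrix.of fun i j => v i (f j)).submatrix id σ).det ^ 2 = _
  rw [Matrix.det_permute', mul_pow, hsign, one_mul, minorDet]

theorem cSq_eq_sq_minorDet {r : ℕ} (w : Fin r → E → K) {B : Finset E} (τ : Fin r ≃ B) :
    cSq w B = minorDet w (fun j => (τ j : E)) ^ 2 := by
  have hB : B.card = r := by simpa using (Fintype.card_congr τ).symm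
  set σ := (B.equivFinOfCardEq hB).symm
  rw [cSq, dif_pos hB]
  change minorDet w (fun j => (σ j : E)) ^ 2 = _
  rw [← sq_minorDet_comp_perm w _ (τ.trans σ.symm)]
  congr 2
  ext j
  simp

theorem card_eq_of_cSq_ne_zero {r : ℕ} {w : Fin r → E → K} {B : Finset E}
    (h : cSq w B ≠ 0) : B.card = r :=
  by_contra fun hB => h (dif_neg hB)

end Minors

section Bases

variable {ι : Type*} {V : Submodule K (E → K)}

noncomputable def basisOfSpanEq {v : ι → E → K} (hli : LinearIndependent K v)
    (hsp : Submodule.span K (Set.range v) = V) : Basis ι K V :=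
  (Basis.span hli).map (LinearEquiv.ofEq _ _ hsp)

@[simp]
theorem coe_basisOfSpanEq_apply {v : ι → E → K} (hli : LinearIndependent K v)
    (hsp : Submodule.span K (Set.range v) = V) (i : ι) :
    (basisOfSpanEq hli hsp i : E → K) = v i := by
  simp [basisOfSpanEq, Basis.span_apply]

theorem IsBasisOf.mem {r : ℕ} {v : Fin r → E → K} (hv : IsBasisOf v V) (i : Fin r) :
    v i ∈ V :=
  hv.2 ▸ Submodule.subset_span (Set.mem_range_self i)

variable [Fintype ι] [DecidableEq ι]

theorem dualBasis_det_coordFun (b : Basis ι K V) (f : ι → E) :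
    b.dualBasis.det (coordFun V ∘ f) = minorDet (fun i => (b i : E → K)) f := by
  rw [Basis.det_apply, minorDet]
  congr 1
  ext i j
  simp [Basis.toMatrix_apply, coordFun]

theorem exists_minorDet_eq_mul (b b' : Basis ι K V) : ∃ c : K, c ≠ 0 ∧ ∀ f : ι → E,
    minorDet (fun i => (b i : E → K)) f = c * minorDet (fun i => (b' i : E → K)) f := by
  refine ⟨b.dualBasis.det b'.dualBasis, (b.dualBasis.isUnit_det _).ne_zero, fun f => ?_⟩
  rw [← dualBasis_det_coordFun, ← dualBasis_det_coordFun]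
  exact DFunLike.congr_fun (AlternatingMap.eq_smul_basis_det b'.dualBasis b.dualBasis.det) _

theorem indep_iff_minorDet_ne_zero (b : Basis ι K V) {B : Finset E} (τ : ι ≃ B) :
    Indep V B ↔ minorDet (fun i => (b i : E → K)) (fun i => (τ i : E)) ≠ 0 := by
  have : FiniteDimensional K V := b.finiteDimensional_of_finite
  have hcard : Fintype.card ι = finrank K (Dual K V) := by
    rw [Subspace.dual_finrank_eq, finrank_eq_card_basis b]
  rw [← dualBasis_det_coordFun, ← isUnit_iff_ne_zero, ← Basis.is_basis_iff_det, Indep,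
    ← linearIndependent_equiv τ]
  exact ⟨fun h => ⟨h, h.span_eq_top_of_card_eq_finrank' hcard⟩, And.left⟩

end Bases

section Matroid

variable [Finite E] (V : Submodule K (E → K))

theorem span_range_coordFun : Submodule.span K (Set.range (coordFun V)) = ⊤ := by
  classical
  have hproj : Set.range (fun e : E => (LinearMap.proj e : (E → K) →ₗ[K] K)) =
      Set.range (Pi.basisFun K E).dualBasis := by
    congr 1
    ext e x
    simp
  rw [show Set.range (coordFun V) = V.subtype.dualMap '' Set.range (fun e => LinearMap.proj e) by
      rw [← Set.range_comp]; rfl,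
    ← Submodule.map_span, hproj, Basis.span_eq, Submodule.map_top, LinearMap.range_eq_top]
  exact LinearMap.dualMap_surjective_of_injective V.injective_subtype

theorem exists_indep_card_eq_finrank : ∃ S : Finset E, Indep V S ∧ S.card = finrank K V := by
  obtain ⟨S, -, -, hspan, hS⟩ := exists_linearIndepOn_extension
    (linearIndepOn_empty K (coordFun V)) (Set.empty_subset Set.univ)
  lift S to Finset E using S.toFinite
  have hS : Indep V S := hS
  refine ⟨S, hS, ?_⟩
  have htop : Submodule.span K (Set.range fun e : S => coordFun V e) = ⊤ := by
    rw [eq_top_iff, ← span_range_coordFun V, Submodule.span_le]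
    rwa [Set.image_univ, Set.image_eq_range] at hspan
  rw [← Subspace.dual_finrank_eq, ← finrank_top, ← htop, finrank_span_eq_card hS,
    Fintype.card_coe]

variable {V}

theorem Indep.card_le_finrank {S : Finset E} (hS : Indep V S) : S.card ≤ finrank K V := by
  simpa [Subspace.dual_finrank_eq] using hS.fintype_card_le_finrank

theorem isBase_iff_indep_and_card_eq {B : Finset E} :
    IsBase V B ↔ Indep V B ∧ B.card = finrank K V := by
  obtain ⟨S, hS, hScard⟩ := exists_indep_card_eq_finrank V
  exact ⟨fun hB => ⟨hB.1, hB.1.card_le_finrank.antisymm (hScard ▸ hB.2 S hS)⟩,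
    fun hB => ⟨hB.1, fun T hT => hB.2 ▸ hT.card_le_finrank⟩⟩

theorem isBase_iff_cSq_ne_zero {r : ℕ} {v : Fin r → E → K} (hv : IsBasisOf v V)
    {B : Finset E} : IsBase V B ↔ cSq v B ≠ 0 := by
  have hr : finrank K V = r := by simpa using finrank_eq_card_basis (basisOfSpanEq hv.1 hv.2)
  rw [isBase_iff_indep_and_card_eq, hr]
  by_cases hB : B.card = r
  · have τ := (B.equivFinOfCardEq hB).symm
    simpa [hB, cSq_eq_sq_minorDet v τ] using
      indep_iff_minorDet_ne_zero (basisOfSpanEq hv.1 hv.2) τ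
  · simp [hB, cSq]

end Matroid

section RestrictionContraction

variable (F : Finset E)

noncomputable def extendByZero : ({x : E // x ∉ F} → K) →ₗ[K] (E → K) :=
  Function.ExtendByZero.linearMap K Subtype.val

variable {F}

theorem extendByZero_apply_of_mem (y : {x : E // x ∉ F} → K) {e : E} (he : e ∈ F) :
    extendByZero F y e = 0 :=
  Function.extend_apply' _ _ _ fun ⟨x, hx⟩ => x.2 (hx ▸ he)

theorem extendByZero_apply_val (y : {x : E // x ∉ F} → K) (x : {x : E // x ∉ F}) :
    extendByZero F y x = y x :=
  Subtype.val_injective.extend_apply _ _ x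

theorem funLeft_extendByZero (y : {x : E // x ∉ F} → K) :
    LinearMap.funLeft K K (fun x : {x : E // x ∉ F} => (x : E)) (extendByZero F y) = y :=
  funext (extendByZero_apply_val y)

theorem extendByZero_funLeft {x : E → K}
    (hx : x ∈ LinearMap.ker (LinearMap.funLeft K K (fun x : {x : E // x ∈ F} => (x : E)))) :
    extendByZero F (LinearMap.funLeft K K (fun x : {x : E // x ∉ F} => (x : E)) x) = x := by
  funext e
  by_cases he : e ∈ F
  · rw [extendByZero_apply_of_mem _ he]
    exact (congrFun hx ⟨e, he⟩).symm
  · exact extendByZero_apply_val _ ⟨e, he⟩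

theorem inf_ker_eq_map_contractConfig (W : Submodule K (E → K)) :
    W ⊓ LinearMap.ker (LinearMap.funLeft K K (fun x : {x : E // x ∈ F} => (x : E))) =
      (contractConfig W F).map (extendByZero F) := by
  ext x
  refine ⟨fun hx => ⟨_, Submodule.mem_map_of_mem hx, extendByZero_funLeft hx.2⟩, ?_⟩
  rintro ⟨-, ⟨y, hy, rfl⟩, rfl⟩
  rwa [extendByZero_funLeft hy.2]

variable {W : Submodule K (E → K)}

theorem exists_adaptedBasis {rres rcon : ℕ} {wres : Fin rres → {x : E // x ∈ F} → K}
    {wcon : Fin rcon → {x : E // x ∉ F} → K} (hwres : IsBasisOf wres (restrictConfig W F))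
    (hwcon : IsBasisOf wcon (contractConfig W F)) :
    ∃ b : Basis (Fin rres ⊕ Fin rcon) K W,
      (∀ i (x : {x : E // x ∈ F}), (b (.inl i) : E → K) x = wres i x) ∧
        ∀ i, (b (.inr i) : E → K) = extendByZero F (wcon i) := by
  set p := LinearMap.funLeft K K (fun x : {x : E // x ∈ F} => (x : E))
  have hlift : ∀ i, ∃ u ∈ W, p u = wres i := fun i => Submodule.mem_map.1 (hwres.mem i)
  choose ures huresW hures using hlift
  have hp_ext : ∀ y, p (extendByZero F y) = 0 := fun y =>
    funext fun x => extendByZero_apply_of_mem y x.2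
  have hli : LinearIndependent K (Sum.elim ures (extendByZero F ∘ wcon)) := by
    refine LinearIndependent.sumElim_of_comp p ?_ ?_ fun i => hp_ext _
    · simpa only [Function.comp_def, hures] using hwres.1
    · refine .of_comp (LinearMap.funLeft K K fun x : {x : E // x ∉ F} => (x : E)) ?_
      simpa only [Function.comp_def, funLeft_extendByZero] using hwcon.1
  have hsp : Submodule.span K (Set.range (Sum.elim ures (extendByZero F ∘ wcon))) = W := by
    refine le_antisymm (Submodule.span_le.2 ?_) (Submodule.le_span_sumElim p huresW ?_ ?_)
    · rintro _ ⟨i | i, rfl⟩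
      · exact huresW i
      · exact ((inf_ker_eq_map_contractConfig W).ge (Submodule.mem_map_of_mem (hwcon.mem i))).1
    · rw [Function.comp_def]
      simp only [hures]
      exact hwres.2.ge
    · rw [inf_ker_eq_map_contractConfig, ← hwcon.2, Submodule.map_span, ← Set.range_comp]
  refine ⟨basisOfSpanEq hli hsp, fun i x => ?_, fun i => by simp⟩
  rw [coe_basisOfSpanEq_apply, Sum.elim_inl, ← hures]
  rfl

theorem minorDet_sumElim_eq_mul {ι κ : Type*} [Fintype ι] [DecidableEq ι] [Fintype κ]
    [DecidableEq κ] {u : ι ⊕ κ → E → K} {a : ι → {x : E // x ∈ F} → K}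
    {c : κ → {x : E // x ∉ F} → K}
    (ha : ∀ i (x : {x : E // x ∈ F}), u (.inl i) x = a i x)
    (hc : ∀ j, u (.inr j) = extendByZero F (c j)) (f : ι → {x : E // x ∈ F})
    (g : κ → {x : E // x ∉ F}) :
    minorDet u (Sum.elim (fun i => (f i : E)) fun j => (g j : E)) =
      minorDet a f * minorDet c g := by
  rw [minorDet, minorDet, minorDet,
    ← Matrix.det_fromBlocks_zero₂₁ _ (Matrix.of fun i j => u (.inl i) (g j))]
  congr 1
  ext (i | i) (j | j) <;>
    simp [ha, hc, extendByZero_apply_of_mem, extendByZero_apply_val]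

variable {r rres rcon : ℕ} {w : Fin r → E → K}
  {wres : Fin rres → {x : E // x ∈ F} → K} {wcon : Fin rcon → {x : E // x ∉ F} → K}

theorem eq_add_of_isBasisOf (hw : IsBasisOf w W) (hwres : IsBasisOf wres (restrictConfig W F))
    (hwcon : IsBasisOf wcon (contractConfig W F)) : r = rres + rcon := by
  obtain ⟨b, -⟩ := exists_adaptedBasis hwres hwcon
  simpa using Fintype.card_congr ((basisOfSpanEq hw.1 hw.2).indexEquiv b)

variable [DecidableEq E]

def finsetSubtypeEquiv (B : Finset E) (p : E → Prop) [DecidablePred p] :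
    B.subtype p ≃ {b : B // p b} where
  toFun y := ⟨⟨y.1, Finset.mem_subtype.1 y.2⟩, y.1.2⟩
  invFun b := ⟨⟨b.1, b.2⟩, Finset.mem_subtype.2 b.1.2⟩
  left_inv _ := rfl
  right_inv _ := rfl

def subtypeSumEquiv (B F : Finset E) : B.subtype (· ∈ F) ⊕ B.subtype (· ∉ F) ≃ B :=
  ((finsetSubtypeEquiv B _).sumCongr (finsetSubtypeEquiv B _)).trans
    (Equiv.sumCompl fun b : B => (b : E) ∈ F)

theorem card_subtype_mem_add_card_subtype_not_mem (B F : Finset E) :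
    (B.subtype (· ∈ F)).card + (B.subtype (· ∉ F)).card = B.card := by
  simpa only [Fintype.card_sum, Fintype.card_coe] using Fintype.card_congr (subtypeSumEquiv B F)

theorem exists_cSq_eq_mul (hw : IsBasisOf w W) (hwres : IsBasisOf wres (restrictConfig W F))
    (hwcon : IsBasisOf wcon (contractConfig W F)) :
    ∃ c : K, c ≠ 0 ∧ ∀ B : Finset E, (B.subtype (· ∈ F)).card = rres →
      (B.subtype (· ∉ F)).card = rcon →
        cSq w B = c ^ 2 * cSq wcon (B.subtype (· ∉ F)) * cSq wres (B.subtype (· ∈ F)) := by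
  obtain ⟨b, hb_res, hb_con⟩ := exists_adaptedBasis hwres hwcon
  let bw := basisOfSpanEq hw.1 hw.2
  let e := bw.indexEquiv b
  obtain ⟨c, hc, hdet⟩ := exists_minorDet_eq_mul bw (b.reindex e.symm)
  refine ⟨c, hc, fun B hres hcon => ?_⟩
  let σres := ((B.subtype (· ∈ F)).equivFinOfCardEq hres).symm
  let σcon := ((B.subtype (· ∉ F)).equivFinOfCardEq hcon).symm
  let τ := (σres.sumCongr σcon).trans (subtypeSumEquiv B F)
  have hminor : minorDet w (fun j => (τ (e j) : E)) =
      c * (minorDet wres fun i => (σres i : {x : E // x ∈ F})) *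
        minorDet wcon fun j => (σcon j : {x : E // x ∉ F}) := by
    have h := hdet fun j => (τ (e j) : E)
    simp only [bw, coe_basisOfSpanEq_apply, Basis.reindex_apply, Equiv.symm_symm] at h
    have hτ : (fun k => (τ k : E)) = Sum.elim (fun i => ((σres i : {x : E // x ∈ F}) : E))
        fun j => ((σcon j : {x : E // x ∉ F}) : E) :=
      funext (Sum.rec (fun _ => rfl) fun _ => rfl)
    rw [h, mul_assoc, ← minorDet_sumElim_eq_mul (u := fun k => (b k : E → K)) hb_res hb_con,
      ← hτ]
    exact congrArg _ (minorDet_comp_equiv (fun k => (b k : E → K)) (fun k => (τ k : E)) e)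
  rw [cSq_eq_sq_minorDet w (e.trans τ), cSq_eq_sq_minorDet wres σres,
    cSq_eq_sq_minorDet wcon σcon]
  simp only [Equiv.trans_apply]
  rw [hminor]
  ring

end RestrictionContraction

variable [Fintype E] [DecidableEq E]

/-- **Theorem (Restriction–contraction for coefficients).**
Let `W ⊆ K^E` realize a matroid `M` and let `F ⊆ E`.  (i) For every basis `B` of `M`,
`B ∩ F` is a basis of `M|_F` iff `B ∖ F` is a basis of `M/F`.  (ii) For fixed bases of
`W`, `W/F` and `W|_F` there is `c ∈ K^*`, independent of `B`, with
`c_{W,B} = c² · c_{W/F,B∖F} · c_{W|_F,B∩F}` for every such basis `B`. -/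
theorem cSq_restriction_contraction
    (W : Submodule K (E → K)) (F : Finset E) {r rres rcon : ℕ}
    (w : Fin r → E → K)
    (wres : Fin rres → {x : E // x ∈ F} → K)
    (wcon : Fin rcon → {x : E // x ∉ F} → K)
    (hw : IsBasisOf w W)
    (hwres : IsBasisOf wres (restrictConfig W F))
    (hwcon : IsBasisOf wcon (contractConfig W F)) :
    (∀ B : Finset E, IsBase W B →
      (IsBase (restrictConfig W F) (B.subtype (· ∈ F)) ↔
       IsBase (contractConfig W F) (B.subtype (· ∉ F)))) ∧
    ∃ c : K, c ≠ 0 ∧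
      ∀ B : Finset E, IsBase W B → IsBase (restrictConfig W F) (B.subtype (· ∈ F)) →
        cSq w B = c ^ 2 * cSq wcon (B.subtype (· ∉ F)) * cSq wres (B.subtype (· ∈ F)) := by
  obtain ⟨c, hc, hcSq⟩ := exists_cSq_eq_mul hw hwres hwcon
  have hcard : ∀ B : Finset E, cSq w B ≠ 0 →
      ((B.subtype (· ∈ F)).card = rres ↔ (B.subtype (· ∉ F)).card = rcon) := by
    intro B hB
    have := card_eq_of_cSq_ne_zero hB
    have := card_subtype_mem_add_card_subtype_not_mem B F
    have := eq_add_of_isBasisOf hw hwres hwcon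
    omega
  simp only [isBase_iff_cSq_ne_zero hw, isBase_iff_cSq_ne_zero hwres,
    isBase_iff_cSq_ne_zero hwcon]
  refine ⟨fun B hB => ⟨fun hres => ?_, fun hcon => ?_⟩, c, hc, fun B hB hres => ?_⟩
  · have hres := card_eq_of_cSq_ne_zero hres
    rw [hcSq B hres ((hcard B hB).1 hres)] at hB
    exact right_ne_zero_of_mul (left_ne_zero_of_mul hB)
  · have hcon := card_eq_of_cSq_ne_zero hcon
    rw [hcSq B ((hcard B hB).2 hcon) hcon] at hB
    exact right_ne_zero_of_mul hB
  · have hres := card_eq_of_cSq_ne_zero hres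
    exact hcSq B hres ((hcard B hB).1 hres)

end Config
end

section
/- Let K be a field, E a finite set, W ⊆ K^E a K-linear subspace of dimension r, and w = (w^1,…,w^r) a basis of W with coordinates w^i_e = e^∨(w^i). Then the determinant of the symmetric r×r matrix Q_w := (Σ_{e∈E} x_e·w^i_e·w^j_e)_{i,j} over K[x_e : e ∈ E] equals Σ_{B ⊆ E, |B| = r} (det (w^i_e)_{1≤i≤r, e∈B})² · Π_{e∈B} x_e; that is, det Q_w = ψ_W computed from the same basis w. -/
/-!
Writing `M = (w^i_e)` for the `r × E` coefficient matrix, `Q_w = M · diag(x) · Mᵀ`. The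
Cauchy–Binet formula expands `det Q_w` as `∑_{|B| = r} det (M · diag x)_B · det M_B`, and
`det (M · diag x)_B = x^B · det M_B` since scaling the columns of `M_B` by the `x_e` scales the
determinant by their product. Cauchy–Binet itself comes from expanding `det (A * B)`
multilinearly in the rows, discarding the non-injective row selections (repeated rows) and
grouping the injective ones by their image.
-/

open scoped BigOperators

namespace Matrix

open Finset

variable {R : Type*} [CommRing R] {n : Type*}

theorem det_mul_eq_sum_prod_mul_det_submatrix [Fintype n] {m : Type*} [Fintype m]
    [DecidableEq m] (A : Matrix m n R) (B : Matrix n m R) :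
    (A * B).det = ∑ f : m → n, (∏ i, A i (f i)) * (B.submatrix f id).det := by
  have rows : A * B = of fun i => ∑ k, A i k • B k := by
    ext i j
    simp [mul_apply, Finset.sum_apply]
  rw [rows]
  exact (detRowAlternating.toMultilinearMap.map_sum _).trans
    (sum_congr rfl fun f _ => detRowAlternating.toMultilinearMap.map_smul_univ _ _)

theorem det_submatrix_eq_zero_of_not_injective {m : Type*} [Fintype m] [DecidableEq m]
    (B : Matrix n m R) {f : m → n} (hf : ¬Function.Injective f) :
    (B.submatrix f id).det = 0 := by
  obtain ⟨i, j, hfij, hij⟩ := Function.not_injective_iff.mp hf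
  exact det_zero_of_row_eq hij (by ext k; simp [hfij])

variable {r : ℕ}

/-- The column order chosen by `S.equivFinOfCardEq` only affects the sign, which cancels in
products of two minors on the same `S`. -/
noncomputable def colMinor (A : Matrix (Fin r) n R) (S : Finset n) : R :=
  if h : S.card = r then
    (A.submatrix id fun j => ((S.equivFinOfCardEq h).symm j : n)).det
  else 0

theorem colMinor_of_card_ne (A : Matrix (Fin r) n R) {S : Finset n} (h : S.card ≠ r) :
    colMinor A S = 0 :=
  dif_neg h

theorem colMinor_map {S' : Type*} [CommRing S'] (f : R →+* S') (A : Matrix (Fin r) n R)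
    (S : Finset n) : colMinor (A.map f) S = f (colMinor A S) := by
  unfold colMinor
  split_ifs
  · exact (f.map_det _).symm
  · exact f.map_zero.symm

theorem colMinor_mul_diagonal [Fintype n] [DecidableEq n] (A : Matrix (Fin r) n R) (d : n → R)
    (S : Finset n) :
    colMinor (A * diagonal d) S = colMinor A S * ∏ e ∈ S, d e := by
  unfold colMinor
  split_ifs with h
  · set ι : Fin r → n := fun j => ((S.equivFinOfCardEq h).symm j : n)
    have hsub :
        (A * diagonal d).submatrix id ι = of fun i j => d (ι j) * A.submatrix id ι i j := by
      ext i j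
      simp [mul_comm]
    have hprod : ∏ j, d (ι j) = ∏ e ∈ S, d e := by
      rw [← prod_coe_sort S, ← (S.equivFinOfCardEq h).symm.prod_comp]
    rw [hsub, det_mul_row, hprod, mul_comm]
  · simp

theorem sum_filter_image_eq_prod_mul_det_submatrix [Fintype n] [DecidableEq n]
    (A : Matrix (Fin r) n R) (B : Matrix n (Fin r) R) (S : Finset n) :
    ∑ f : Fin r → n with univ.image f = S, (∏ i, A i (f i)) * (B.submatrix f id).det =
      colMinor A S * colMinor Bᵀ S := by
  by_cases h : S.card = r
  · set e := S.equivFinOfCardEq h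
    set ι : Fin r → n := fun j => (e.symm j : n)
    have image_comp_perm (σ : Equiv.Perm (Fin r)) : univ.image (ι ∘ σ) = S := by
      ext x
      simp only [mem_image, mem_univ, true_and, Function.comp_apply]
      refine ⟨fun ⟨i, hi⟩ => hi ▸ (e.symm (σ i)).2, fun hx => ⟨σ.symm (e ⟨x, hx⟩), by simp [ι]⟩⟩
    have fiber : ∑ σ : Equiv.Perm (Fin r), (∏ i, A i (ι (σ i))) * (B.submatrix (ι ∘ σ) id).det =
        ∑ f : Fin r → n with univ.image f = S, (∏ i, A i (f i)) * (B.submatrix f id).det := by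
      refine sum_bij (fun σ _ => ι ∘ σ) (fun σ _ => by simp [image_comp_perm])
        (fun σ _ τ _ hστ => ?_) (fun f hf => ?_) (fun _ _ => rfl)
      · exact Equiv.ext fun i => by simpa [ι] using congrFun hστ i
      · have hfS : univ.image f = S := (mem_filter.mp hf).2
        have hmem (i : Fin r) : f i ∈ S := hfS ▸ mem_image_of_mem f (mem_univ i)
        have hf_inj : Function.Injective f := by
          have := card_image_iff.mp (hfS ▸ h.trans (card_fin r).symm)
          rwa [coe_univ, Set.injOn_univ] at this
        have hσ : Function.Injective fun i => e ⟨f i, hmem i⟩ := fun a b hab =>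
          hf_inj (congrArg Subtype.val (e.injective hab))
        refine ⟨Equiv.ofBijective _ (Finite.injective_iff_bijective.mp hσ), mem_univ _, ?_⟩
        ext i
        simp [ι]
    rw [← fiber, colMinor, colMinor, dif_pos h, dif_pos h]
    change _ = (A.submatrix id ι).det * ((B.submatrix ι id)ᵀ).det
    rw [det_transpose, ← det_transpose (A.submatrix id ι), det_apply', sum_mul]
    refine sum_congr rfl fun σ _ => ?_
    rw [show B.submatrix (ι ∘ σ) id = (B.submatrix ι id).submatrix σ id from rfl, det_permute]
    simp only [transpose_apply, submatrix_apply, id]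
    ring
  · rw [colMinor_of_card_ne A h, zero_mul]
    refine sum_eq_zero fun f hf => ?_
    have hf_not_inj : ¬Function.Injective f := fun hf_inj => h <| by
      rw [← (mem_filter.mp hf).2, card_image_of_injective _ hf_inj, card_univ, Fintype.card_fin]
    rw [det_submatrix_eq_zero_of_not_injective B hf_not_inj, mul_zero]

theorem det_mul_eq_sum_colMinor_mul_colMinor [Fintype n] [DecidableEq n]
    (A : Matrix (Fin r) n R) (B : Matrix n (Fin r) R) :
    (A * B).det = ∑ S ∈ univ.powersetCard r, colMinor A S * colMinor Bᵀ S := by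
  rw [det_mul_eq_sum_prod_mul_det_submatrix, ← sum_fiberwise univ (fun f => univ.image f)]
  simp only [sum_filter_image_eq_prod_mul_det_submatrix]
  refine (sum_subset (subset_univ _) fun S _ hS => ?_).symm
  rw [colMinor_of_card_ne A fun h => hS (mem_powersetCard.mpr ⟨subset_univ S, h⟩), zero_mul]

end Matrix

namespace Config

open MvPolynomial Matrix

theorem cSq_eq_colMinor_sq {K E : Type} [Field K] {r : ℕ} (w : Fin r → E → K) (B : Finset E) :
    cSq w B = colMinor (Matrix.of w) B ^ 2 := by
  unfold cSq colMinor
  split_ifs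
  · rfl
  · simp

variable {K : Type} [Field K] {E : Type} [Fintype E] [DecidableEq E]

theorem Qform_eq_mul_diagonal_mul_transpose {r : ℕ} (w : Fin r → E → K) :
    Qform w = (of w).map (C : K →+* MvPolynomial E K) * diagonal (X : E → MvPolynomial E K) *
      ((of w).map (C : K →+* MvPolynomial E K))ᵀ := by
  refine Matrix.ext fun i j => ?_
  simp only [Qform, C_mul, of_apply, mul_apply, map_apply, diagonal_apply, mul_ite, mul_zero,
    Finset.sum_ite_eq', Finset.mem_univ, ↓reduceIte, transpose_apply]
  exact Finset.sum_congr rfl fun e _ => by ring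

theorem det_Qform_eq_sum_cSq_general
    {r : ℕ} (w : Fin r → E → K) :
    (Qform w).det =
      ∑ B ∈ Finset.univ.powersetCard r,
        MvPolynomial.C (cSq w B) * ∏ e ∈ B, MvPolynomial.X e := by
  rw [Qform_eq_mul_diagonal_mul_transpose, det_mul_eq_sum_colMinor_mul_colMinor]
  refine Finset.sum_congr rfl fun B _ => ?_
  rw [transpose_transpose, colMinor_mul_diagonal, colMinor_map, cSq_eq_colMinor_sq, map_pow]
  ring

/-- **Theorem (Configuration polynomial from configuration form).**
For a subspace `W ⊆ K^E` of dimension `r` with basis `w`, the determinant of the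
configuration form `Q_w` equals `∑_{B ⊆ E, |B| = r} (det (w^i_e)_{i, e∈B})² · ∏_{e∈B} x_e`. -/
theorem det_Qform_eq_sum_cSq
    (W : Submodule K (E → K)) {r : ℕ} (w : Fin r → E → K) (hw : IsBasisOf w W) :
    (Qform w).det =
      ∑ B ∈ Finset.univ.powersetCard r,
        MvPolynomial.C (cSq w B) * ∏ e ∈ B, MvPolynomial.X e :=
  det_Qform_eq_sum_cSq_general w

end Config
end

section
/- Let M be a connected matroid on a finite set E and let C₁ be any circuit of M. Then there exists a handle decomposition of M starting with F₁ = C₁: a chain F₁ ⊊ F₂ ⊊ ⋯ ⊊ F_k = E such that F₁ = C₁ is a circuit of M, the restriction M|_{F_i} is connected for every i, and F_i ∖ F_{i−1} is a handle of M|_{F_i} for i = 2,…,k. -/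
/-- A matroid on the finite ground set `E`, given by its independent sets. -/
structure FinMatroid (E : Type) [Fintype E] [DecidableEq E] where
  /-- The independent sets. -/
  Indep : Finset E → Prop
  /-- The empty set is independent. -/
  empty_indep : Indep ∅
  /-- Subsets of independent sets are independent. -/
  subset_indep : ∀ ⦃I J : Finset E⦄, Indep J → I ⊆ J → Indep I
  /-- The augmentation axiom. -/
  aug : ∀ ⦃I J : Finset E⦄, Indep I → Indep J → I.card < J.card →
    ∃ e ∈ J, e ∉ I ∧ Indep (insert e I)

namespace FinMatroid

variable {E : Type} [Fintype E] [DecidableEq E] (M : FinMatroid E)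

/-- A circuit: a minimal dependent set. -/
def IsCircuit (C : Finset E) : Prop :=
  ¬ M.Indep C ∧ ∀ D ⊂ C, M.Indep D

/-- The restriction `M|_F` is connected: `F` is nonempty and any two distinct elements
of `F` lie on a common circuit contained in `F` (the circuits of `M|_F` are exactly the
circuits of `M` contained in `F`). -/
def ConnectedOn (F : Finset E) : Prop :=
  F.Nonempty ∧ ∀ e ∈ F, ∀ f ∈ F, e ≠ f →
    ∃ C : Finset E, M.IsCircuit C ∧ C ⊆ F ∧ e ∈ C ∧ f ∈ C

/-- The matroid is connected: the ground set is nonempty and any two distinct elements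
lie on a common circuit. -/
def Connected : Prop :=
  M.ConnectedOn Finset.univ

/-- `H` is a handle of the restriction `M|_F`: `H` is a nonempty subset of `F` and every
circuit of `M|_F` (i.e. circuit of `M` contained in `F`) meeting `H` contains `H`. -/
def HandleOn (F H : Finset E) : Prop :=
  H.Nonempty ∧ H ⊆ F ∧
    ∀ C : Finset E, M.IsCircuit C → C ⊆ F → (∃ x ∈ C, x ∈ H) → H ⊆ C

/-! Grow the chain one circuit at a time. If `F ≠ E` is connected, connectedness of `M` yields
circuits meeting both `F` and its complement; one such circuit `C` with `|C \ F|` minimal makes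
`C \ F` a handle of `M|_{F ∪ C}`, because a circuit of `F ∪ C` meeting `C \ F` is either `C`
itself or a competitor whose part outside `F` lies in `C \ F`, hence equals it. The restriction
to `F ∪ C` stays connected since lying on a common circuit is a transitive relation (Oxley,
Prop. 4.1.2), which follows from strong circuit elimination. -/

variable {M} {C C₁ C₂ D F : Finset E} {e f x : E}

def toMatroid : Matroid E :=
  (IndepMatroid.ofFinset Set.univ M.Indep M.empty_indep M.subset_indep M.aug
    fun _ _ ↦ Set.subset_univ _).matroid

lemma toMatroid_indep_coe (I : Finset E) : M.toMatroid.Indep I ↔ M.Indep I := by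
  simp [toMatroid]

lemma isCircuit_iff_toMatroid : M.IsCircuit C ↔ M.toMatroid.IsCircuit C := by
  rw [Matroid.isCircuit_iff_forall_ssubset, Matroid.Dep, toMatroid_indep_coe]
  refine ⟨fun ⟨hdep, hmin⟩ ↦ ⟨⟨hdep, Set.subset_univ _⟩, fun I hI ↦ ?_⟩,
    fun ⟨⟨hdep, _⟩, hmin⟩ ↦ ⟨hdep, fun D hD ↦ ?_⟩⟩
  · obtain ⟨D, rfl⟩ := I.toFinite.exists_finset_coe
    exact (toMatroid_indep_coe D).2 (hmin D (Finset.coe_ssubset.1 hI))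
  · exact (toMatroid_indep_coe D).1 (hmin (Finset.coe_ssubset.2 hD))

lemma IsCircuit.strong_elimination (h₁ : M.IsCircuit C₁) (h₂ : M.IsCircuit C₂) (he₁ : e ∈ C₁)
    (he₂ : e ∈ C₂) (hf₁ : f ∈ C₁) (hf₂ : f ∉ C₂) :
    ∃ C ⊆ (C₁ ∪ C₂).erase e, M.IsCircuit C ∧ f ∈ C := by
  obtain ⟨C, hCsub, hC, hfC⟩ := (isCircuit_iff_toMatroid.1 h₁).strong_elimination
    (isCircuit_iff_toMatroid.1 h₂) he₁ he₂ hf₁ hf₂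
  obtain ⟨C, rfl⟩ := C.toFinite.exists_finset_coe
  refine ⟨C, ?_, isCircuit_iff_toMatroid.2 hC, hfC⟩
  rwa [← Finset.coe_subset, Finset.coe_erase, Finset.coe_union]

lemma IsCircuit.nonempty (hC : M.IsCircuit C) : C.Nonempty := by
  rw [Finset.nonempty_iff_ne_empty]
  rintro rfl
  exact hC.1 M.empty_indep

lemma IsCircuit.exists_mem_notMem (hC : M.IsCircuit C) (hD : M.IsCircuit D) (hxD : x ∈ D)
    (hxC : x ∉ C) : ∃ y ∈ C, y ∉ D := by
  by_contra! hCD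
  exact hC.1 (hD.2 C ((Finset.ssubset_iff_of_subset hCD).2 ⟨x, hxD, hxC⟩))

lemma IsCircuit.exists_isCircuit_subset_union (h₁ : M.IsCircuit C₁) (h₂ : M.IsCircuit C₂)
    (hmeet : (C₁ ∩ C₂).Nonempty) (he : e ∈ C₁) (hf : f ∈ C₂) :
    ∃ C, M.IsCircuit C ∧ C ⊆ C₁ ∪ C₂ ∧ e ∈ C ∧ f ∈ C := by
  induction hn : (C₁ ∪ C₂).card using Nat.strong_induction_on generalizing C₁ C₂ with
  | _ n ih =>
  by_cases hf₁ : f ∈ C₁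
  · exact ⟨C₁, h₁, Finset.subset_union_left, he, hf₁⟩
  by_cases he₂ : e ∈ C₂
  · exact ⟨C₂, h₂, Finset.subset_union_right, he₂, hf⟩
  obtain ⟨x, hx⟩ := hmeet
  rw [Finset.mem_inter] at hx
  obtain ⟨C₃, hC₃sub, hC₃, heC₃⟩ := h₁.strong_elimination h₂ hx.1 hx.2 he he₂
  obtain ⟨C₄, hC₄sub, hC₄, hfC₄⟩ := h₂.strong_elimination h₁ hx.2 hx.1 hf hf₁
  rw [Finset.union_comm] at hC₄sub
  have hC₃U : C₃ ⊆ C₁ ∪ C₂ := hC₃sub.trans (Finset.erase_subset _ _)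
  have hC₄U : C₄ ⊆ C₁ ∪ C₂ := hC₄sub.trans (Finset.erase_subset _ _)
  -- the induction applies to `(C₃, C₄)` if they meet, else to `(C₃, C₂)`: both unions miss a
  -- point of `C₁ ∪ C₂` (`x`, resp. a point of `C₄ \ C₂`)
  have card_lt {X : Finset E} {y : E} (hX : X ⊆ (C₁ ∪ C₂).erase y) (hy : y ∈ C₁ ∪ C₂) :
      X.card < n :=
    hn ▸ (Finset.card_le_card hX).trans_lt (Finset.card_erase_lt_of_mem hy)
  rcases (C₃ ∩ C₄).eq_empty_or_nonempty with hdisj | hmeet₃₄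
  · obtain ⟨y, hyC₄, hyC₂⟩ := hC₄.exists_mem_notMem h₂ hx.2 (Finset.notMem_erase x _ <| hC₄sub ·)
    obtain ⟨z, hzC₃, hzC₁⟩ := hC₃.exists_mem_notMem h₁ hx.1 (Finset.notMem_erase x _ <| hC₃sub ·)
    have hyC₃ : y ∉ C₃ := fun hy ↦
      Finset.eq_empty_iff_forall_notMem.1 hdisj y (Finset.mem_inter.2 ⟨hy, hyC₄⟩)
    have hsub : C₃ ∪ C₂ ⊆ (C₁ ∪ C₂).erase y :=
      Finset.union_subset (Finset.subset_erase.2 ⟨hC₃U, hyC₃⟩)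
        (Finset.subset_erase.2 ⟨Finset.subset_union_right, hyC₂⟩)
    obtain ⟨C, hC, hCsub, heC, hfC⟩ := ih _ (card_lt hsub (hC₄U hyC₄)) hC₃ h₂
      ⟨z, Finset.mem_inter.2 ⟨hzC₃, by simpa [hzC₁] using hC₃U hzC₃⟩⟩ heC₃ hf rfl
    exact ⟨C, hC, hCsub.trans (Finset.union_subset hC₃U Finset.subset_union_right), heC, hfC⟩
  · obtain ⟨C, hC, hCsub, heC, hfC⟩ := ih _
      (card_lt (Finset.union_subset hC₃sub hC₄sub) (Finset.mem_union_left _ hx.1))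
      hC₃ hC₄ hmeet₃₄ heC₃ hfC₄ rfl
    exact ⟨C, hC, hCsub.trans (Finset.union_subset hC₃U hC₄U), heC, hfC⟩

lemma IsCircuit.connectedOn (hC : M.IsCircuit C) : M.ConnectedOn C :=
  ⟨hC.nonempty, fun _ he _ hf _ ↦ ⟨C, hC, subset_rfl, he, hf⟩⟩

lemma connectedOn_of_forall_exists_isCircuit {X : Finset E} {g : E} (hg : g ∈ X)
    (h : ∀ a ∈ X, ∃ C, M.IsCircuit C ∧ C ⊆ X ∧ a ∈ C ∧ g ∈ C) : M.ConnectedOn X := by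
  refine ⟨⟨g, hg⟩, fun a ha b hb _ ↦ ?_⟩
  obtain ⟨Ca, hCa, hCaX, haCa, hgCa⟩ := h a ha
  obtain ⟨Cb, hCb, hCbX, hbCb, hgCb⟩ := h b hb
  obtain ⟨C, hC, hCsub, haC, hbC⟩ :=
    hCa.exists_isCircuit_subset_union hCb ⟨g, Finset.mem_inter.2 ⟨hgCa, hgCb⟩⟩ haCa hbCb
  exact ⟨C, hC, hCsub.trans (Finset.union_subset hCaX hCbX), haC, hbC⟩

lemma ConnectedOn.union_isCircuit (hF : M.ConnectedOn F) (hC : M.IsCircuit C)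
    (hmeet : (F ∩ C).Nonempty) : M.ConnectedOn (F ∪ C) := by
  obtain ⟨g, hg⟩ := hmeet
  rw [Finset.mem_inter] at hg
  refine connectedOn_of_forall_exists_isCircuit (Finset.mem_union_left _ hg.1) fun a ha ↦ ?_
  by_cases haC : a ∈ C
  · exact ⟨C, hC, Finset.subset_union_right, haC, hg.2⟩
  have haF : a ∈ F := by simpa [haC] using ha
  obtain ⟨D, hD, hDF, haD, hgD⟩ := hF.2 a haF g hg.1 (by rintro rfl; exact haC hg.2)
  exact ⟨D, hD, hDF.trans Finset.subset_union_left, haD, hgD⟩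

lemma handleOn_union_sdiff_of_minimal (hC : M.IsCircuit C) (hmeet : (F ∩ C).Nonempty)
    (hleave : (C \ F).Nonempty)
    (hmin : ∀ D, M.IsCircuit D → (F ∩ D).Nonempty → (D \ F).Nonempty →
      (C \ F).card ≤ (D \ F).card) :
    M.HandleOn (F ∪ C) ((F ∪ C) \ F) := by
  rw [Finset.union_sdiff_left]
  refine ⟨hleave, Finset.sdiff_subset.trans Finset.subset_union_right, ?_⟩
  rintro D hD hDsub ⟨x, hxD, hxCF⟩
  have hDF : D \ F ⊆ C \ F := fun a ha ↦ by
    rw [Finset.mem_sdiff] at ha ⊢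
    exact ⟨by simpa [ha.2] using hDsub ha.1, ha.2⟩
  rcases (F ∩ D).eq_empty_or_nonempty with hdisj | hDmeet
  · obtain ⟨z, hz⟩ := hmeet
    rw [Finset.mem_inter] at hz
    have hzD : z ∉ D := fun hzD ↦
      Finset.eq_empty_iff_forall_notMem.1 hdisj z (Finset.mem_inter.2 ⟨hz.1, hzD⟩)
    obtain ⟨y, hyD, hyC⟩ := hD.exists_mem_notMem hC hz.2 hzD
    have hyF : y ∉ F := fun hyF ↦
      Finset.eq_empty_iff_forall_notMem.1 hdisj y (Finset.mem_inter.2 ⟨hyF, hyD⟩)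
    exact absurd (Finset.mem_sdiff.1 (hDF (Finset.mem_sdiff.2 ⟨hyD, hyF⟩))).1 hyC
  · have hDeq := Finset.eq_of_subset_of_card_le hDF
      (hmin D hD hDmeet ⟨x, Finset.mem_sdiff.2 ⟨hxD, (Finset.mem_sdiff.1 hxCF).2⟩⟩)
    exact hDeq ▸ Finset.sdiff_subset

lemma ConnectedOn.exists_handle_extension (hconn : M.Connected) (hF : M.ConnectedOn F)
    (hFE : F ≠ Finset.univ) :
    ∃ F', F ⊂ F' ∧ M.ConnectedOn F' ∧ M.HandleOn F' (F' \ F) := by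
  classical
  let P : Finset E → Prop := fun C ↦ M.IsCircuit C ∧ (F ∩ C).Nonempty ∧ (C \ F).Nonempty
  have hP : (Finset.univ.filter P).Nonempty := by
    obtain ⟨e, he⟩ := Finset.exists_of_ssubset (Finset.ssubset_univ_iff.2 hFE)
    obtain ⟨f, hf⟩ := hF.1
    obtain ⟨C, hC, -, heC, hfC⟩ := hconn.2 e (Finset.mem_univ e) f (Finset.mem_univ f)
      (by rintro rfl; exact he.2 hf)
    exact ⟨C, Finset.mem_filter.2 ⟨Finset.mem_univ C, hC, ⟨f, Finset.mem_inter.2 ⟨hf, hfC⟩⟩,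
      ⟨e, Finset.mem_sdiff.2 ⟨heC, he.2⟩⟩⟩⟩
  obtain ⟨C, hCP, hCmin⟩ := (Finset.univ.filter P).exists_min_image (fun C ↦ (C \ F).card) hP
  obtain ⟨hC, hmeet, hleave⟩ := (Finset.mem_filter.1 hCP).2
  refine ⟨F ∪ C, left_lt_sup.2 ?_, hF.union_isCircuit hC hmeet,
    handleOn_union_sdiff_of_minimal hC hmeet hleave fun D hD hDmeet hDleave ↦
      hCmin D (Finset.mem_filter.2 ⟨Finset.mem_univ D, hD, hDmeet, hDleave⟩)⟩
  obtain ⟨w, hw⟩ := hleave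
  exact fun hCF ↦ (Finset.mem_sdiff.1 hw).2 (hCF (Finset.mem_sdiff.1 hw).1)

variable (M) in
def IsHandleDecomposition (F₀ : Finset E) (k : ℕ) (F : ℕ → Finset E) : Prop :=
  1 ≤ k ∧ F 1 = F₀ ∧ F k = Finset.univ ∧
    (∀ i, 1 ≤ i → i < k → F i ⊂ F (i + 1)) ∧
    (∀ i, 1 ≤ i → i ≤ k → M.ConnectedOn (F i)) ∧
    (∀ i, 2 ≤ i → i ≤ k → M.HandleOn (F i) (F i \ F (i - 1)))

lemma Connected.isHandleDecomposition_univ (hconn : M.Connected) :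
    M.IsHandleDecomposition Finset.univ 1 fun _ ↦ Finset.univ :=
  ⟨le_rfl, rfl, rfl, by omega, fun _ _ _ ↦ hconn, by omega⟩

lemma IsHandleDecomposition.cons {F₀ F₁ : Finset E} {k : ℕ} {G : ℕ → Finset E}
    (hG : M.IsHandleDecomposition F₁ k G) (hF₀ : M.ConnectedOn F₀) (hF₀₁ : F₀ ⊂ F₁)
    (hH : M.HandleOn F₁ (F₁ \ F₀)) :
    M.IsHandleDecomposition F₀ (k + 1) fun i ↦ if i ≤ 1 then F₀ else G (i - 1) := by
  obtain ⟨hk, hG₁, hGk, hchain, hconn, hhandle⟩ := hG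
  refine ⟨by omega, by simp, by simpa [show k ≠ 0 by omega] using hGk, fun i hi hik ↦ ?_,
    fun i hi hik ↦ ?_, fun i hi hik ↦ ?_⟩
  · rcases i with _ | _ | j
    · omega
    · simpa [hG₁] using hF₀₁
    · simpa using hchain (j + 1) (by omega) (by omega)
  · rcases i with _ | _ | j
    · omega
    · simpa using hF₀
    · simpa using hconn (j + 1) (by omega) (by omega)
  · rcases i with _ | _ | _ | j
    · omega
    · omega
    · simpa [hG₁] using hH
    · simpa using hhandle (j + 2) (by omega) (by omega)

theorem Connected.exists_isHandleDecomposition (hconn : M.Connected) {F : Finset E}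
    (hF : M.ConnectedOn F) :
    ∃ k G, M.IsHandleDecomposition F k G := by
  by_cases hFE : F = Finset.univ
  · exact hFE ▸ ⟨1, _, hconn.isHandleDecomposition_univ⟩
  obtain ⟨F', hFF', hF', hH⟩ := hF.exists_handle_extension hconn hFE
  obtain ⟨k, G, hG⟩ := hconn.exists_isHandleDecomposition hF'
  exact ⟨k + 1, _, hG.cons hF hFF' hH⟩
termination_by Fᶜ.card
decreasing_by exact Finset.card_lt_card (compl_lt_compl_iff_lt.2 hFF')

/-- **Theorem (Existence of handle decompositions).**
Let `M` be a connected matroid on a finite set `E` and let `C₁` be a circuit of `M`.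
Then `M` admits a handle decomposition starting with `C₁`: a chain
`C₁ = F₁ ⊊ F₂ ⊊ ⋯ ⊊ F_k = E` such that each restriction `M|_{F i}` is connected and
`F i ∖ F (i−1)` is a handle of `M|_{F i}` for `i = 2, …, k`. -/
theorem exists_handle_decomposition
    (M : FinMatroid E) (hconn : M.Connected) (C₁ : Finset E) (hC : M.IsCircuit C₁) :
    ∃ (k : ℕ) (F : ℕ → Finset E),
      1 ≤ k ∧ F 1 = C₁ ∧ F k = Finset.univ ∧
      (∀ i, 1 ≤ i → i < k → F i ⊂ F (i + 1)) ∧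
      (∀ i, 1 ≤ i → i ≤ k → M.ConnectedOn (F i)) ∧
      (∀ i, 2 ≤ i → i ≤ k → M.HandleOn (F i) (F i \ F (i - 1))) :=
  hconn.exists_isHandleDecomposition hC.connectedOn

end FinMatroid
end

section
/- Let K be a field and W ⊆ K^E a realization of a matroid M whose ground set E is itself a circuit, with rk M = |E| − 1 ≥ 2. Then the radical of the Jacobian ideal J_W equals the intersection of the ideals ⟨x_e, x_f, x_g⟩ over all 3-element subsets {e,f,g} ⊆ E; that is, the reduced Jacobian scheme Σ_W^red is the union of all codimension-3 coordinate subspaces of K^E. -/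
/-!
Every `r`-subset of `E` is a basis of the circuit, so by Cauchy–Binet
`ψ_W = ∑_e c_e ∏_{f ≠ e} x_f` with every `c_e` a nonzero squared maximal minor. The polynomial
`ψ_W` and its partial derivatives are sums of squarefree monomials omitting at most two
variables, so `J_W` lies in every prime `⟨x_e, x_f, x_g⟩`. Conversely
`ψ_W - x_e ∂_e ψ_W = c_e ∏_{f ≠ e} x_f` puts these monomials into `J_W`, and then
`(∏_{f ≠ a, b} x_f) · ∂_a ψ_W ≡ c_b (∏_{f ≠ a, b} x_f)²` modulo them. A polynomial in the
intersection of the primes has only monomials divisible by some `∏_{f ≠ a, b} x_f`.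
-/

open scoped BigOperators

namespace Config

variable {K : Type} [Field K] {E : Type} [Fintype E] [DecidableEq E]

def IsCircuit (W : Submodule K (E → K)) (C : Finset E) : Prop :=
  ¬ Indep W C ∧ ∀ D ⊂ C, Indep W D

open MvPolynomial Finset

section CauchyBinet

variable {R : Type*} [CommRing R] {m n : Type*}

theorem _root_.Matrix.det_mul_eq_sum_prod_mul_det_submatrix_s19 [Fintype m] [DecidableEq m] [Fintype n]
    (B : Matrix m n R) (C : Matrix n m R) :
    (B * C).det = ∑ p : m → n, (∏ i, B i (p i)) * (C.submatrix p id).det := by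
  have hrows : B * C = fun i => ∑ k, B i k • C k := by
    ext i j
    simp [Matrix.mul_apply, Finset.sum_apply]
  rw [hrows]
  exact (Matrix.detRowAlternating.toMultilinearMap.map_sum _).trans
    (Finset.sum_congr rfl fun p _ => Matrix.detRowAlternating.toMultilinearMap.map_smul_univ _ _)

variable (g : ∀ k : n, m ≃ {x // x ≠ k})

theorem injective_comp_equiv_compl :
    Function.Injective fun q : n × Equiv.Perm m => fun i => (g q.1 (q.2 i) : n) := by
  rintro ⟨k, σ⟩ ⟨k', σ'⟩ h
  obtain rfl : k = k' := by
    by_contra hkk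
    have := congrFun h (σ'⁻¹ ((g k').symm ⟨k, hkk⟩))
    simp only [Equiv.Perm.coe_inv, Equiv.apply_symm_apply] at this
    exact (g k _).2 this
  simp only [Prod.mk.injEq, true_and]
  ext i
  exact (g k).injective (Subtype.val_injective (congrFun h i))

theorem exists_comp_equiv_compl_eq [Fintype m] [Fintype n] [DecidableEq n] [Nonempty n]
    {p : m → n} (hp : Function.Injective p) :
    ∃ q : n × Equiv.Perm m, (fun i => (g q.1 (q.2 i) : n)) = p := by
  have hcard : Fintype.card m < Fintype.card n := by
    obtain ⟨k⟩ := ‹Nonempty n›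
    exact (Fintype.card_congr (g k)).trans_lt (Fintype.card_subtype_lt (not_not.mpr rfl))
  obtain ⟨k, hk⟩ : ∃ k, k ∉ Set.range p := by
    by_contra! h
    exact hcard.not_ge (Fintype.card_le_of_surjective p h)
  have hpk : ∀ i, p i ≠ k := fun i hi => hk ⟨i, hi⟩
  let σ : m → m := fun i => (g k).symm ⟨p i, hpk i⟩
  have hσ : Function.Injective σ := fun i j hij => hp (by simpa [σ] using hij)
  exact ⟨(k, Equiv.ofBijective σ (Finite.injective_iff_bijective.mp hσ)), by ext i; simp [σ]⟩

theorem _root_.Matrix.det_mul_eq_sum_det_mul_det_of_equiv_compl [Fintype m] [DecidableEq m]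
    [Fintype n] [DecidableEq n] [Nonempty n] (B : Matrix m n R) (C : Matrix n m R) :
    (B * C).det = ∑ k, (B.submatrix id (fun i => (g k i : n))).det *
      (C.submatrix (fun i => (g k i : n)) id).det := by
  rw [Matrix.det_mul_eq_sum_prod_mul_det_submatrix_s19,
    ← Fintype.sum_of_injective _ (injective_comp_equiv_compl g) _ _ ?_ fun _ => rfl,
    Fintype.sum_prod_type]
  · refine Finset.sum_congr rfl fun k _ => ?_
    rw [← Matrix.det_transpose, Matrix.det_apply', Finset.sum_mul]
    refine Finset.sum_congr rfl fun σ _ => ?_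
    rw [show C.submatrix (fun i => (g k (σ i) : n)) id =
      (C.submatrix (fun i => (g k i : n)) id).submatrix σ id from rfl, Matrix.det_permute]
    simp only [Matrix.transpose_apply, Matrix.submatrix_apply, id_eq]
    ring
  · intro p hp
    obtain ⟨i, j, hij, hne⟩ := Function.not_injective_iff.mp fun hinj =>
      hp (exists_comp_equiv_compl_eq g hinj)
    rw [Matrix.det_zero_of_row_eq hne (by ext; simp [hij]), mul_zero]

end CauchyBinet

section MonomialIdeals

variable {σ R : Type*}

theorem _root_.MvPolynomial.pderiv_prod_X_of_notMem [CommSemiring R] [DecidableEq σ] {S : Finset σ}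
    {i : σ} (hi : i ∉ S) : pderiv i (∏ j ∈ S, X j : MvPolynomial σ R) = 0 := by
  induction S using Finset.induction_on with
  | empty => simp
  | insert j S hj ih =>
    rw [Finset.prod_insert hj, Derivation.leibniz, ih (fun h => hi (Finset.mem_insert_of_mem h)),
      pderiv_X_of_ne (fun h : j = i => hi (h ▸ Finset.mem_insert_self j S))]
    simp

theorem _root_.MvPolynomial.pderiv_prod_X_of_mem [CommSemiring R] [DecidableEq σ] {S : Finset σ}
    {i : σ} (hi : i ∈ S) : pderiv i (∏ j ∈ S, X j : MvPolynomial σ R) = ∏ j ∈ S.erase i, X j := by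
  rw [← Finset.mul_prod_erase S X hi, Derivation.leibniz, pderiv_X_self,
    pderiv_prod_X_of_notMem (Finset.notMem_erase i S)]
  simp

theorem _root_.MvPolynomial.prod_X_dvd_monomial [CommSemiring R] (m : σ →₀ ℕ) (a : R) :
    (∏ i ∈ m.support, X i : MvPolynomial σ R) ∣ monomial m a := by
  rw [monomial_eq, Finsupp.prod]
  exact Dvd.dvd.mul_left (Finset.prod_dvd_prod_of_dvd _ _ fun i hi =>
    dvd_pow_self _ (Finsupp.mem_support_iff.mp hi)) _

theorem _root_.MvPolynomial.prod_X_mem_span_X_image [CommSemiring R] [DecidableEq σ]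
    {S T : Finset σ} (h : (S ∩ T).Nonempty) :
    (∏ i ∈ S, X i : MvPolynomial σ R) ∈ Ideal.span (X '' (T : Set σ)) := by
  obtain ⟨i, hi⟩ := h
  rw [Finset.mem_inter] at hi
  rw [← Finset.mul_prod_erase S X hi.1]
  exact Ideal.mul_mem_right _ _ (Ideal.subset_span ⟨i, hi.2, rfl⟩)

theorem _root_.MvPolynomial.isPrime_span_X_image [CommRing R] [IsDomain R] (s : Set σ) :
    (Ideal.span (X '' s : Set (MvPolynomial σ R))).IsPrime := by
  classical
  let kill : MvPolynomial σ R →ₐ[R] MvPolynomial σ R := aeval fun i => if i ∈ s then 0 else X i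
  have hkill : (Ideal.Quotient.mkₐ R (Ideal.span (X '' s))).comp kill =
      Ideal.Quotient.mkₐ R (Ideal.span (X '' s)) := by
    refine MvPolynomial.algHom_ext fun i => ?_
    by_cases hi : i ∈ s
    · simpa [kill, hi] using
        (Ideal.Quotient.eq_zero_iff_mem.mpr (Ideal.subset_span (Set.mem_image_of_mem X hi))).symm
    · simp [kill, hi]
  have hker : RingHom.ker kill = Ideal.span (X '' s) := by
    refine le_antisymm (fun p hp => ?_) ?_
    · rw [← Ideal.Quotient.eq_zero_iff_mem, ← Ideal.Quotient.mkₐ_eq_mk R, ← hkill]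
      simp [(RingHom.mem_ker).mp hp]
    · rw [Ideal.span_le]
      rintro _ ⟨i, hi, rfl⟩
      simp [kill, hi]
  exact hker ▸ RingHom.ker_isPrime kill

end MonomialIdeals

theorem _root_.Finset.exists_subset_pair_of_card_le_two {α : Type*} [DecidableEq α] [Nonempty α]
    {s : Finset α} (hs : #s ≤ 2) : ∃ a b, s ⊆ {a, b} := by
  rcases s.eq_empty_or_nonempty with rfl | ⟨a, ha⟩
  · obtain ⟨a⟩ := ‹Nonempty α›
    exact ⟨a, a, Finset.empty_subset _⟩
  obtain ⟨b, hb⟩ := Finset.card_le_one_iff_subset_singleton.mp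
    (show #(s.erase a) ≤ 1 by rw [Finset.card_erase_of_mem ha]; omega)
  refine ⟨a, b, fun x hx => ?_⟩
  rcases eq_or_ne x a with rfl | hxa
  · exact Finset.mem_insert_self _ _
  · exact Finset.mem_insert_of_mem (hb (Finset.mem_erase.mpr ⟨hxa, hx⟩))

section CircuitPolynomial
variable {σ R : Type*} [CommRing R]

noncomputable def jacobianIdeal (φ : MvPolynomial σ R) : Ideal (MvPolynomial σ R) :=
  Ideal.span ({φ} ∪ Set.range fun i => pderiv i φ)

theorem self_mem_jacobianIdeal (φ : MvPolynomial σ R) : φ ∈ jacobianIdeal φ :=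
  Ideal.subset_span (Set.mem_union_left _ rfl)

theorem pderiv_mem_jacobianIdeal (φ : MvPolynomial σ R) (i : σ) : pderiv i φ ∈ jacobianIdeal φ :=
  Ideal.subset_span (Set.mem_union_right _ ⟨i, rfl⟩)

theorem jacobianIdeal_le_iff {φ : MvPolynomial σ R} {I : Ideal (MvPolynomial σ R)} :
    jacobianIdeal φ ≤ I ↔ φ ∈ I ∧ ∀ i, pderiv i φ ∈ I := by
  simp [jacobianIdeal, Ideal.span_le, Set.insert_subset_iff, Set.range_subset_iff]

variable [Fintype σ] [DecidableEq σ]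

noncomputable def circuitPoly (c : σ → R) : MvPolynomial σ R :=
  ∑ e, C (c e) * ∏ f ∈ {e}ᶜ, X f

variable (c : σ → R)

theorem pderiv_circuitPoly (i : σ) :
    pderiv i (circuitPoly c) = ∑ e ∈ {i}ᶜ, C (c e) * ∏ f ∈ {i, e}ᶜ, X f := by
  rw [circuitPoly, map_sum, Fintype.sum_eq_add_sum_compl i, pderiv_C_mul,
    pderiv_prod_X_of_notMem (by simp), mul_zero, zero_add]
  refine Finset.sum_congr rfl fun e he => ?_
  rw [pderiv_C_mul, pderiv_prod_X_of_mem (by simpa [eq_comm] using he), ← compl_insert]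

theorem circuitPoly_eq_add (e : σ) :
    circuitPoly c = C (c e) * ∏ f ∈ {e}ᶜ, X f + X e * pderiv e (circuitPoly c) := by
  rw [pderiv_circuitPoly, Finset.mul_sum]
  conv_lhs => rw [circuitPoly, Fintype.sum_eq_add_sum_compl e]
  congr 1
  refine Finset.sum_congr rfl fun f hf => ?_
  have hef : e ∈ ({f}ᶜ : Finset σ) := by simpa [eq_comm] using hf
  rw [compl_insert, ← Finset.mul_prod_erase _ X hef]
  ring

variable {c}

theorem prod_X_compl_singleton_mem_jacobianIdeal (hc : ∀ e, IsUnit (c e)) (e : σ) :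
    ∏ f ∈ {e}ᶜ, X f ∈ jacobianIdeal (circuitPoly c) := by
  have h : C (c e) * ∏ f ∈ {e}ᶜ, X f = circuitPoly c - X e * pderiv e (circuitPoly c) :=
    eq_sub_of_add_eq (circuitPoly_eq_add c e).symm
  rw [← Ideal.unit_mul_mem_iff_mem _ ((hc e).map C), h]
  exact sub_mem (self_mem_jacobianIdeal _) (Ideal.mul_mem_left _ _ (pderiv_mem_jacobianIdeal _ e))

theorem sq_prod_X_compl_pair_mem_jacobianIdeal (hc : ∀ e, IsUnit (c e)) (a b : σ) :
    (∏ f ∈ {a, b}ᶜ, X f) ^ 2 ∈ jacobianIdeal (circuitPoly c) := by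
  rcases eq_or_ne a b with rfl | hab
  · rw [Finset.insert_eq_of_mem (Finset.mem_singleton_self a)]
    exact Ideal.pow_mem_of_mem _ (prod_X_compl_singleton_mem_jacobianIdeal hc a) 2 two_pos
  have hsplit : pderiv a (circuitPoly c) =
      C (c b) * ∏ f ∈ {a, b}ᶜ, X f + ∑ e ∈ {a, b}ᶜ, C (c e) * ∏ f ∈ {a, e}ᶜ, X f := by
    rw [pderiv_circuitPoly, ← Finset.add_sum_erase _ _ (by simpa [eq_comm] using hab),
      ← compl_insert, Finset.pair_comm b a]
  set M : MvPolynomial σ R := ∏ f ∈ {a, b}ᶜ, X f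
  -- every other term of `M * ∂_a ψ` is a multiple of `∏_{f ≠ a} x_f`, which lies in the ideal
  have hrest : ∑ e ∈ {a, b}ᶜ, M * (C (c e) * ∏ f ∈ {a, e}ᶜ, X f) ∈
      jacobianIdeal (circuitPoly c) := by
    refine Ideal.sum_mem _ fun e he => ?_
    rw [mul_left_comm]
    refine Ideal.mul_mem_left _ _
      (Ideal.mem_of_dvd _ ?_ (prod_X_compl_singleton_mem_jacobianIdeal hc a))
    have hsub : ({a}ᶜ : Finset σ) ⊆ {a, b}ᶜ ∪ {a, e}ᶜ := by
      intro x
      simp only [mem_compl, mem_union, mem_insert, mem_singleton] at he ⊢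
      grind
    rw [← Finset.prod_union_inter]
    exact (Finset.prod_dvd_prod_of_subset _ _ _ hsub).mul_right _
  have hM := Ideal.mul_mem_left _ M (pderiv_mem_jacobianIdeal (circuitPoly c) a)
  rw [hsplit, mul_add, Finset.mul_sum, Ideal.add_mem_iff_left _ hrest, mul_left_comm,
    Ideal.unit_mul_mem_iff_mem _ ((hc b).map C)] at hM
  rwa [sq]

theorem jacobianIdeal_circuitPoly_le_span_X {T : Finset σ} (hT : #T = 3) :
    jacobianIdeal (circuitPoly c) ≤ Ideal.span (X '' (T : Set σ)) := by
  have hmem : ∀ S : Finset σ, #S ≤ 2 →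
      (∏ f ∈ Sᶜ, X f : MvPolynomial σ R) ∈ Ideal.span (X '' (T : Set σ)) := by
    intro S hS
    refine prod_X_mem_span_X_image (Finset.not_disjoint_iff_nonempty_inter.mp fun hdisj => ?_)
    have := Finset.card_le_card (Finset.subset_compl_iff_disjoint_left.mpr hdisj)
    rw [compl_compl] at this
    omega
  refine jacobianIdeal_le_iff.mpr ⟨Ideal.sum_mem _ fun e _ => ?_, fun i => ?_⟩
  · exact Ideal.mul_mem_left _ _ (hmem _ (by simp))
  · rw [pderiv_circuitPoly]
    exact Ideal.sum_mem _ fun e _ => Ideal.mul_mem_left _ _ (hmem _ Finset.card_le_two)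

theorem prod_X_mem_radical_jacobianIdeal [Nonempty σ] (hc : ∀ e, IsUnit (c e)) {S : Finset σ}
    (hS : #Sᶜ ≤ 2) : ∏ f ∈ S, X f ∈ (jacobianIdeal (circuitPoly c)).radical := by
  obtain ⟨a, b, hab⟩ := Finset.exists_subset_pair_of_card_le_two hS
  exact Ideal.mem_of_dvd _ (Finset.prod_dvd_prod_of_subset _ _ _ (compl_le_iff_compl_le.mp hab))
    ⟨2, sq_prod_X_compl_pair_mem_jacobianIdeal hc a b⟩

theorem card_compl_support_le_two {p : MvPolynomial σ R}
    (hp : p ∈ ⨅ T ∈ (univ.powersetCard 3 : Finset (Finset σ)), Ideal.span (X '' (T : Set σ)))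
    {m : σ →₀ ℕ} (hm : m ∈ p.support) : #m.supportᶜ ≤ 2 := by
  by_contra! h
  obtain ⟨T, hTm, hT⟩ := Finset.exists_subset_card_eq (show 3 ≤ #m.supportᶜ by omega)
  have hpT := (Submodule.mem_iInf _).mp ((Submodule.mem_iInf _).mp hp T)
    (Finset.mem_powersetCard.mpr ⟨Finset.subset_univ T, hT⟩)
  obtain ⟨i, hi, hmi⟩ := mem_ideal_span_X_image.mp hpT m hm
  exact Finset.mem_compl.mp (hTm hi) (Finsupp.mem_support_iff.mpr hmi)

theorem radical_jacobianIdeal_circuitPoly [IsDomain R] [Nonempty σ] (hc : ∀ e, IsUnit (c e)) :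
    (jacobianIdeal (circuitPoly c)).radical =
      ⨅ T ∈ (univ.powersetCard 3 : Finset (Finset σ)), Ideal.span (X '' (T : Set σ)) := by
  refine le_antisymm (le_iInf₂ fun T hT => ?_) fun p hp => ?_
  · exact (isPrime_span_X_image _).radical_le_iff.mpr
      (jacobianIdeal_circuitPoly_le_span_X (Finset.mem_powersetCard.mp hT).2)
  · rw [as_sum p]
    exact Ideal.sum_mem _ fun m hm => Ideal.mem_of_dvd _ (prod_X_dvd_monomial m _)
      (prod_X_mem_radical_jacobianIdeal hc (card_compl_support_le_two hp hm))

end CircuitPolynomial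

section Configuration

variable {r : ℕ}

def coordMatrix (w : Fin r → E → K) : Matrix E (Fin r) K :=
  Matrix.of fun e i => w i e

theorem psi_eq_circuitPoly [Nonempty E] (w : Fin r → E → K) (g : ∀ e : E, Fin r ≃ {x // x ≠ e}) :
    psi w = circuitPoly fun e => ((coordMatrix w).submatrix (fun i => (g e i : E)) id).det ^ 2 := by
  have hQ : Qform w = Matrix.of (fun (i : Fin r) (f : E) => (X f * C (w i f) : MvPolynomial E K)) *
      (coordMatrix w).map (C : K → MvPolynomial E K) := by
    refine Matrix.ext fun i j => ?_
    simp [Qform, coordMatrix, Matrix.mul_apply, mul_comm, mul_left_comm]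
  rw [psi, hQ, Matrix.det_mul_eq_sum_det_mul_det_of_equiv_compl g, circuitPoly]
  refine Finset.sum_congr rfl fun e _ => ?_
  set A := (coordMatrix w).submatrix (fun i => (g e i : E)) id
  have hB : (Matrix.of fun (i : Fin r) (f : E) => (X f * C (w i f) : MvPolynomial E K)).submatrix
      id (fun i => (g e i : E)) = Matrix.of fun i j => X (g e j : E) * (A.map C).transpose i j :=
    rfl
  have hC : ((coordMatrix w).map C).submatrix (fun i => (g e i : E)) id =
      A.map (C : K → MvPolynomial E K) :=
    rfl
  have hX : ∏ i, (X (g e i : E) : MvPolynomial E K) = ∏ f ∈ {e}ᶜ, X f :=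
    ((g e).prod_comp fun x => X (x : E)).trans (Finset.prod_subtype _ (by simp) X).symm
  rw [hB, Matrix.det_mul_row, hX, Matrix.det_transpose, hC, ← RingHom.mapMatrix_apply,
    ← RingHom.map_det, map_pow]
  ring

set_option linter.unusedSectionVars false in
theorem det_submatrix_coordMatrix_ne_zero {W : Submodule K (E → K)} {w : Fin r → E → K}
    (hw : IsBasisOf w W) {s : Fin r → E} (hs : LinearIndependent K fun i => coordFun W (s i)) :
    ((coordMatrix w).submatrix s id).det ≠ 0 := by
  let b : Module.Basis (Fin r) K W := (Module.Basis.span hw.1).map (LinearEquiv.ofEq _ _ hw.2)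
  have hrows : ((coordMatrix w).submatrix s id).row =
      b.dualBasis.equivFun ∘ fun i => coordFun W (s i) := by
    ext i j
    simp [b, coordMatrix, coordFun, Module.Basis.span_apply]
  have hli : LinearIndependent K ((coordMatrix w).submatrix s id).row :=
    hrows ▸ hs.map' b.dualBasis.equivFun.toLinearMap b.dualBasis.equivFun.ker
  exact ((Matrix.isUnit_iff_isUnit_det _).mp
    (Matrix.linearIndependent_rows_iff_isUnit.mp hli)).ne_zero

theorem linearIndependent_coordFun_of_isCircuit {W : Submodule K (E → K)}
    (hcirc : IsCircuit W univ) {e : E} (g : Fin r ≃ {x // x ≠ e}) :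
    LinearIndependent K fun i => coordFun W (g i : E) := by
  have hindep : Indep W {e}ᶜ :=
    hcirc.2 _ (Finset.compl_singleton e ▸ Finset.erase_ssubset (Finset.mem_univ e))
  exact hindep.comp (fun i => ⟨g i, by simpa using (g i).2⟩) fun i j hij =>
    g.injective (Subtype.ext (by simpa using hij))

end Configuration

theorem jacIdeal_radical_of_circuit_general
    (W : Submodule K (E → K)) {r : ℕ} (w : Fin r → E → K)
    (hw : IsBasisOf w W) (hcirc : IsCircuit W Finset.univ)
    (hcard : Fintype.card E = r + 1) :
    (jacIdeal w).radical =
      ⨅ T ∈ (Finset.univ.powersetCard 3 : Finset (Finset E)),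
        Ideal.span ((fun e => (MvPolynomial.X e : MvPolynomial E K)) '' (T : Set E)) := by
  have : Nonempty E := Fintype.card_pos_iff.mp (by omega)
  have g : ∀ e : E, Fin r ≃ {x // x ≠ e} := fun e =>
    Fintype.equivOfCardEq (by simp [Fintype.card_subtype_compl, hcard])
  have hminor : ∀ e, ((coordMatrix w).submatrix (fun i => (g e i : E)) id).det ≠ 0 := fun e =>
    det_submatrix_coordMatrix_ne_zero hw (linearIndependent_coordFun_of_isCircuit hcirc (g e))
  change (jacobianIdeal (psi w)).radical = _
  rw [psi_eq_circuitPoly w g]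
  exact radical_jacobianIdeal_circuitPoly fun e => (pow_ne_zero 2 (hminor e)).isUnit

/-- **Theorem (Generic points for circuits).**
Let `W ⊆ K^E` realize a matroid whose ground set `E` is a circuit, of rank
`|E| − 1 ≥ 2`.  Then the radical of the Jacobian ideal `J_W` is the intersection of
the ideals `⟨x_e, x_f, x_g⟩` over all `3`-element subsets of `E`: the reduced Jacobian
scheme is the union of all codimension-`3` coordinate subspaces of `K^E`. -/
theorem jacIdeal_radical_of_circuit
    (W : Submodule K (E → K)) {r : ℕ} (w : Fin r → E → K)
    (hw : IsBasisOf w W) (hcirc : IsCircuit W Finset.univ)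
    (hcard : Fintype.card E = r + 1) (hrk : 2 ≤ r) :
    (jacIdeal w).radical =
      ⨅ T ∈ (Finset.univ.powersetCard 3 : Finset (Finset E)),
        Ideal.span ((fun e => (MvPolynomial.X e : MvPolynomial E K)) '' (T : Set E)) :=
  jacIdeal_radical_of_circuit_general W w hw hcirc hcard

end Config
end
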